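/- arXiv:2409.03135 — 5 statements merged into one kernel-verified Lean document; each statement's English description precedes it below -/
import Mathlib

section
/- Let N be a positive integer and let (F_α)_{α=1}^{N²} be an orthonormal basis of the space of N×N complex matrices with respect to the Hilbert–Schmidt inner product ⟨A,B⟩ = tr(B*A). Then for every N×N complex matrix A, we have ∑_{α=1}^{N²} F_α A F_α* = tr(A)·1, where 1 is the N×N identity matrix. -/
open Matrix BigOperators

/-- If `(F_α)_{α=1}^{N²}` is an orthonormal basis of `M_N(ℂ)` for the
Hilbert–Schmidt inner product `⟨A,B⟩ = tr(B* A)`, then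
`∑ α, F_α A F_α* = tr(A) • 1`. -/
theorem stmt0 (N : ℕ) (hN : 0 < N) (F : Fin (N ^ 2) → Matrix (Fin N) (Fin N) ℂ)
    (hortho : ∀ α β, ((F β)ᴴ * F α).trace = if α = β then 1 else 0)
    (A : Matrix (Fin N) (Fin N) ℂ) :
    ∑ α, F α * A * (F α)ᴴ = A.trace • (1 : Matrix (Fin N) (Fin N) ℂ) := by
  classical
  have hli : LinearIndependent ℂ F := by
    rw [linearIndependent_iff']
    intro s c h β hβ
    have h2 := congrArg (fun M => ((F β)ᴴ * M).trace) h
    simpa [Matrix.mul_sum, Matrix.mul_smul, hortho, Finset.sum_ite_eq', hβ] using h2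
  have hcard : Fintype.card (Fin (N ^ 2)) = Module.finrank ℂ (Matrix (Fin N) (Fin N) ℂ) := by
    simp [Module.finrank_matrix, sq]
  haveI : Nonempty (Fin (N ^ 2)) := ⟨⟨0, by positivity⟩⟩
  let b := basisOfLinearIndependentOfCardEqFinrank hli hcard
  have hb : ∀ β, b β = F β := fun β =>
    congrFun (coe_basisOfLinearIndependentOfCardEqFinrank hli hcard) β
  let T : Matrix (Fin N) (Fin N) ℂ →ₗ[ℂ] Matrix (Fin N) (Fin N) ℂ :=
    { toFun := fun B => ∑ α, ((F α)ᴴ * B).trace • F α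
      map_add' := by
        intro x y
        simp [Matrix.mul_add, add_smul, Finset.sum_add_distrib]
      map_smul' := by
        intro c x
        simp [Matrix.mul_smul, smul_smul, Finset.smul_sum] }
  have hT : ∀ B, T B = B := by
    have : T = LinearMap.id := by
      apply b.ext
      intro β
      simp [T, hb, hortho, Finset.sum_ite_eq']
    intro B; rw [this]; rfl
  have hcomp : ∀ i j k l : Fin N,
      ∑ α, F α i k * star (F α j l) =
        (if j = i then (1:ℂ) else 0) * (if l = k then 1 else 0) := by
    intro i j k l
    have := congrFun (congrFun (hT (Matrix.single j l 1)) i) k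
    simp only [T, LinearMap.coe_mk, AddHom.coe_mk, Matrix.sum_apply, Matrix.smul_apply,
      smul_eq_mul] at this
    have htr : ∀ α, ((F α)ᴴ * Matrix.single j l 1).trace = star (F α j l) := by
      intro α
      simp [Matrix.trace, Matrix.diag, Matrix.mul_apply, Matrix.single,
        Matrix.conjTranspose_apply, Finset.sum_ite_eq, ite_and]
    simp only [htr] at this
    simp_rw [mul_comm (star _)] at this
    rw [this]
    simp [Matrix.single, ite_and, eq_comm]
    split_ifs <;> rfl
  ext i j
  simp only [Matrix.sum_apply, Matrix.mul_apply, Matrix.smul_apply, Matrix.one_apply,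
    smul_eq_mul, Matrix.trace, Matrix.diag, Matrix.conjTranspose_apply]
  rw [Finset.sum_comm]
  have key : ∀ k, ∑ α, (∑ l, F α i l * A l k) * star (F α j k)
      = ∑ l, A l k * ((if j = i then (1:ℂ) else 0) * if k = l then 1 else 0) := by
    intro k
    simp_rw [Finset.sum_mul]
    rw [Finset.sum_comm]
    congr 1; ext l
    simp_rw [mul_comm (F _ i l) (A l k), mul_assoc, ← Finset.mul_sum, hcomp]
  simp_rw [key]
  simp [Finset.mul_sum, Finset.sum_ite_eq, mul_comm, mul_left_comm]
  split_ifs with h1 h2 <;> first | rfl | simp_all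
end

section
/- Let L: M_N(ℂ) → M_N(ℂ) be a linear map with L(A*) = L(A)* for all A ∈ M_N(ℂ). Then there exist K ∈ M_N(ℂ), matrices G_1,…,G_{N²−1} ∈ M_N(ℂ), and real scalars λ_1,…,λ_{N²} such that L(A) = AK* + KA + ∑_{p=1}^{N²−1} λ_p G_p A G_p* for all A, where tr(K) = λ_{N²}/2, tr(G_p) = 0 for all p, and tr(G_p* G_q) = δ_{pq} for all p,q. -/
open Matrix BigOperators

open Finset
open scoped InnerProductSpace ComplexConjugate

theorem auxA (N : ℕ) (hN : 0 < N) :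
    ∃ F : Option (Fin (N ^ 2 - 1)) → Matrix (Fin N) (Fin N) ℂ,
      (∃ α : ℝ, 0 < α ∧ (α : ℂ) ^ 2 * N = 1 ∧ F none = (α : ℂ) • 1) ∧
      (∀ p, (F (some p)).trace = 0) ∧
      (∀ r s, ((F r)ᴴ * F s).trace = if r = s then 1 else 0) ∧
      (∀ m j a b, ∑ r, conj (F r m j) * F r a b =
        if m = a then (if j = b then (1:ℂ) else 0) else 0) := by
  classical
  set α : ℝ := (Real.sqrt N)⁻¹ with hα
  have hNR : (0:ℝ) < N := by exact_mod_cast hN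
  have hαpos : 0 < α := by positivity
  have hα2 : (α:ℝ) ^ 2 * N = 1 := by
    rw [hα, inv_pow, Real.sq_sqrt hNR.le]
    field_simp
  have hα2' : (α:ℂ) ^ 2 * N = 1 := by exact_mod_cast hα2
  set v : EuclideanSpace ℂ (Fin N × Fin N) := WithLp.toLp 2 (fun P : Fin N × Fin N => if P.1 = P.2 then (α : ℂ) else 0) with hv
  have hvinner : ∀ u : EuclideanSpace ℂ (Fin N × Fin N), ⟪v, u⟫_ℂ = (α:ℂ) * ∑ i : Fin N, u (i, i) := by
    intro u
    rw [PiLp.inner_apply, Fintype.sum_prod_type, Finset.mul_sum]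
    refine Finset.sum_congr rfl fun i _ => ?_
    rw [Finset.sum_eq_single i]
    · simp [hv, mul_comm]
    · intro b _ hb; simp [hv, hb.symm]
    · simp
  -- v has norm 1
  have hvv : ⟪v, v⟫_ℂ = 1 := by
    rw [hvinner]
    have : ∀ i : Fin N, v (i, i) = (α:ℂ) := by intro i; simp [hv]
    simp only [this, Finset.sum_const, Finset.card_univ, Fintype.card_fin, nsmul_eq_mul]
    rw [← hα2']
    ring
  have hvne : v ≠ 0 := by
    intro h
    have : ⟪v, v⟫_ℂ = 0 := by rw [h]; simp
    rw [hvv] at this; exact one_ne_zero this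
  set S : Submodule ℂ (EuclideanSpace ℂ (Fin N × Fin N)) := (ℂ ∙ v)ᗮ with hS
  have hdim : Module.finrank ℂ (EuclideanSpace ℂ (Fin N × Fin N)) = N ^ 2 := by
    rw [finrank_euclideanSpace]
    simp [sq]
  have hdimS : Module.finrank ℂ S = N ^ 2 - 1 := by
    have h1 := Submodule.finrank_add_finrank_orthogonal (K := ℂ ∙ v)
    rw [finrank_span_singleton hvne, hdim] at h1
    rw [← hS] at h1
    omega
  set b0 : OrthonormalBasis (Fin (N ^ 2 - 1)) ℂ S :=
    (stdOrthonormalBasis ℂ S).reindex (finCongr hdimS) with hb0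
  set Fv : Option (Fin (N ^ 2 - 1)) → EuclideanSpace ℂ (Fin N × Fin N) := fun r => Option.elim r v (fun p => (b0 p : EuclideanSpace ℂ (Fin N × Fin N))) with hFv
  have hb0S : ∀ p, (b0 p : EuclideanSpace ℂ (Fin N × Fin N)) ∈ S := fun p => (b0 p).2
  have hvb0 : ∀ p, ⟪v, (b0 p : EuclideanSpace ℂ (Fin N × Fin N))⟫_ℂ = 0 := by
    intro p
    exact (Submodule.mem_orthogonal _ _).1 (hb0S p) v (Submodule.mem_span_singleton_self v)
  have hon : Orthonormal ℂ Fv := by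
    rw [orthonormal_iff_ite]
    rintro (_|p) (_|q)
    · simpa [hFv] using hvv
    · simpa [hFv] using hvb0 q
    · simp only [hFv, Option.elim]
      rw [← inner_conj_symm, hvb0 p]
      simp
    · have := orthonormal_iff_ite.1 b0.orthonormal p q
      simp only [hFv, Option.elim, Submodule.coe_inner] at *
      rw [this]
      simp [Option.some.injEq]
  have hcard : Fintype.card (Option (Fin (N ^ 2 - 1))) = Module.finrank ℂ (EuclideanSpace ℂ (Fin N × Fin N)) := by
    rw [hdim]
    have : 1 ≤ N ^ 2 := Nat.one_le_pow _ _ hN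
    rw [Fintype.card_option, Fintype.card_fin]
    omega
  set B : OrthonormalBasis (Option (Fin (N ^ 2 - 1))) ℂ (EuclideanSpace ℂ (Fin N × Fin N)) :=
    OrthonormalBasis.mk hon (by
      rw [← (basisOfOrthonormalOfCardEqFinrank hon hcard).span_eq]
      rw [coe_basisOfOrthonormalOfCardEqFinrank]) with hB
  have hBcoe : ∀ r, B r = Fv r := fun r => by rw [hB, OrthonormalBasis.coe_mk]
  -- the matrices
  refine ⟨fun r => Matrix.of (fun i j => Fv r (i, j)), ⟨α, hαpos, hα2', ?_⟩, ?_, ?_, ?_⟩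
  · ext i j
    simp only [Matrix.of_apply, hFv, Option.elim, hv, Matrix.smul_apply, Matrix.one_apply]
    split <;> simp
  · intro p
    have h := hvb0 p
    rw [hvinner] at h
    have : (∑ i : Fin N, (b0 p : EuclideanSpace ℂ (Fin N × Fin N)) (i, i)) = 0 := by
      rcases mul_eq_zero.1 h with h' | h'
      · exact absurd h' (by exact_mod_cast hαpos.ne')
      · exact h'
    rw [Matrix.trace]
    simpa [Matrix.diag, hFv] using this
  · intro r s
    have h := orthonormal_iff_ite.1 hon r s
    rw [PiLp.inner_apply, Fintype.sum_prod_type] at h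
    simp only [RCLike.inner_apply, starRingEnd_apply] at h
    rw [Matrix.trace, ← h, Finset.sum_comm]
    simp only [Matrix.diag_apply, Matrix.mul_apply, Matrix.conjTranspose_apply, Matrix.of_apply]
    exact Finset.sum_congr rfl fun i _ => Finset.sum_congr rfl fun k _ => mul_comm _ _
  · intro m j a b
    have h := B.sum_inner_mul_inner (EuclideanSpace.single (m, j) (1:ℂ))
      (EuclideanSpace.single (a, b) (1:ℂ))
    simp only [hBcoe, EuclideanSpace.inner_single_left, EuclideanSpace.inner_single_right,
      EuclideanSpace.single_apply] at h
    have h2 := congrArg (starRingEnd ℂ) h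
    rw [map_sum] at h2
    simp only [_root_.map_mul, Complex.conj_conj, _root_.map_one, one_mul] at h2
    simp only [Matrix.of_apply]
    rw [h2]
    by_cases h3 : m = a <;> by_cases h4 : j = b <;>
      simp [h3, h4, Prod.ext_iff, eq_comm]


theorem auxB {N : ℕ} (L : Matrix (Fin N) (Fin N) ℂ →ₗ[ℂ] Matrix (Fin N) (Fin N) ℂ)
    (hstar : ∀ A, L Aᴴ = (L A)ᴴ)
    {ι : Type} [Fintype ι] [DecidableEq ι] (F : ι → Matrix (Fin N) (Fin N) ℂ)
    (hcomp : ∀ m j a b, ∑ r, conj (F r m j) * F r a b =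
      if m = a then (if j = b then (1:ℂ) else 0) else 0) :
    ∃ c : ι → ι → ℂ, (∀ r s, conj (c r s) = c s r) ∧
      ∀ A, L A = ∑ r, ∑ s, c r s • (F r * A * (F s)ᴴ) := by
  classical
  set c : ι → ι → ℂ := fun r s => ∑ x : (Fin N × Fin N) × (Fin N × Fin N),
    conj (F r x.1.1 x.1.2) * (L (single x.1.2 x.2.2 1)) x.1.1 x.2.1 * F s x.2.1 x.2.2
    with hc
  have key : ∀ (j k m n : Fin N), conj ((L (single j k 1)) m n)
      = (L (single k j 1)) n m := by
    intro j k m n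
    have h1 : (single j k (1:ℂ))ᴴ = single k j 1 := by
      ext i i'
      simp [Matrix.single, Matrix.conjTranspose_apply, and_comm]
    rw [← h1, hstar]
    rfl
  have hherm : ∀ r s, conj (c r s) = c s r := by
    intro r s
    rw [hc]
    simp only
    rw [map_sum]
    calc ∑ x : (Fin N × Fin N) × (Fin N × Fin N),
          conj (conj (F r x.1.1 x.1.2) * (L (single x.1.2 x.2.2 1)) x.1.1 x.2.1
            * F s x.2.1 x.2.2)
        = ∑ x : (Fin N × Fin N) × (Fin N × Fin N),
          (fun y : (Fin N × Fin N) × (Fin N × Fin N) =>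
            conj (F s y.1.1 y.1.2) * (L (single y.1.2 y.2.2 1)) y.1.1 y.2.1
              * F r y.2.1 y.2.2) (Equiv.prodComm _ _ x) := by
          refine Finset.sum_congr rfl fun x _ => ?_
          simp only [_root_.map_mul, Complex.conj_conj, Equiv.prodComm_apply, Prod.fst_swap,
            Prod.snd_swap]
          rw [key]
          ring
      _ = c s r := Fintype.sum_equiv (Equiv.prodComm _ _) _ _ (fun x => rfl)
  refine ⟨c, hherm, ?_⟩
  -- build R as a linear map
  set R : Matrix (Fin N) (Fin N) ℂ →ₗ[ℂ] Matrix (Fin N) (Fin N) ℂ :=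
    ∑ r, ∑ s, c r s • ((LinearMap.mulLeft ℂ (F r)).comp (LinearMap.mulRight ℂ ((F s)ᴴ))) with hR
  have hRapp : ∀ A, R A = ∑ r, ∑ s, c r s • (F r * A * (F s)ᴴ) := by
    intro A
    rw [hR]
    simp [LinearMap.sum_apply, LinearMap.smul_apply, LinearMap.comp_apply,
      LinearMap.mulLeft_apply, LinearMap.mulRight_apply, mul_assoc]
  have hLR : L = R := by
    refine Module.Basis.ext (Matrix.stdBasis ℂ (Fin N) (Fin N)) ?_
    rintro ⟨j, k⟩
    rw [Matrix.stdBasis_eq_single, hRapp]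
    ext a b
    have hcomp' : ∀ m j a b, ∑ r, F r m j * conj (F r a b) =
        if m = a then (if j = b then (1:ℂ) else 0) else 0 := by
      intro m j a b
      calc ∑ r, F r m j * conj (F r a b)
          = conj (∑ r, conj (F r m j) * F r a b) := by
            rw [map_sum]
            exact Finset.sum_congr rfl fun r _ => by
              rw [_root_.map_mul, Complex.conj_conj]
        _ = _ := by rw [hcomp]; split_ifs <;> simp
    have hent : ∀ (r s : ι), (F r * single j k (1:ℂ) * (F s)ᴴ) a b
        = F r a j * conj (F s b k) := by
      intro r s
      rw [Matrix.mul_apply, Finset.sum_eq_single k]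
      · rw [Matrix.mul_single_apply_same, Matrix.conjTranspose_apply]
        rw [mul_one, starRingEnd_apply]
      · intro y _ hy
        simp [Matrix.mul_single_apply_of_ne, hy]
      · simp
    simp only [Matrix.sum_apply, Matrix.smul_apply, smul_eq_mul]
    simp_rw [hent, hc]
    simp_rw [Finset.sum_mul]
    have e1 : ∀ r : ι, (∑ s : ι, ∑ x : (Fin N × Fin N) × (Fin N × Fin N),
        (conj (F r x.1.1 x.1.2) * L (single x.1.2 x.2.2 1) x.1.1 x.2.1 * F s x.2.1 x.2.2)
          * (F r a j * conj (F s b k)))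
        = ∑ x : (Fin N × Fin N) × (Fin N × Fin N), ∑ s : ι,
        (conj (F r x.1.1 x.1.2) * L (single x.1.2 x.2.2 1) x.1.1 x.2.1 * F s x.2.1 x.2.2)
          * (F r a j * conj (F s b k)) := fun r => Finset.sum_comm
    simp_rw [e1]
    rw [Finset.sum_comm]
    have e2 : ∀ x : (Fin N × Fin N) × (Fin N × Fin N),
        (∑ r : ι, ∑ s : ι,
          (conj (F r x.1.1 x.1.2) * L (single x.1.2 x.2.2 1) x.1.1 x.2.1 * F s x.2.1 x.2.2)
            * (F r a j * conj (F s b k)))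
        = (if x.1.1 = a then if x.1.2 = j then (1:ℂ) else 0 else 0)
            * L (single x.1.2 x.2.2 1) x.1.1 x.2.1
            * (if x.2.1 = b then if x.2.2 = k then (1:ℂ) else 0 else 0) := by
      intro x
      rw [← hcomp x.1.1 x.1.2 a j, ← hcomp' x.2.1 x.2.2 b k]
      rw [Finset.sum_mul, Finset.sum_mul]
      refine Finset.sum_congr rfl fun r _ => ?_
      rw [Finset.mul_sum]
      refine Finset.sum_congr rfl fun s _ => ?_
      ring
    rw [Finset.sum_congr rfl fun x _ => e2 x]
    rw [Fintype.sum_prod_type]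
    simp [Fintype.sum_prod_type, ite_mul, mul_ite, zero_mul, mul_zero, one_mul, mul_one,
      Finset.sum_ite_eq, Finset.sum_ite_eq']
  intro A
  rw [hLR, hRapp]


theorem stmt6' (N : ℕ) (hN : 0 < N)
    (L : Matrix (Fin N) (Fin N) ℂ →ₗ[ℂ] Matrix (Fin N) (Fin N) ℂ)
    (hstar : ∀ A, L Aᴴ = (L A)ᴴ)
    (F : Option (Fin (N ^ 2 - 1)) → Matrix (Fin N) (Fin N) ℂ)
    (α : ℝ) (hαpos : 0 < α) (hα2 : (α : ℂ) ^ 2 * N = 1) (hFnone : F none = (α : ℂ) • 1)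
    (hFtr : ∀ p, (F (some p)).trace = 0)
    (hFon : ∀ r s, ((F r)ᴴ * F s).trace = if r = s then 1 else 0)
    (c : Option (Fin (N ^ 2 - 1)) → Option (Fin (N ^ 2 - 1)) → ℂ)
    (hherm : ∀ r s, conj (c r s) = c s r)
    (hform : ∀ A, L A = ∑ r, ∑ s, c r s • (F r * A * (F s)ᴴ)) :
    ∃ (K : Matrix (Fin N) (Fin N) ℂ)
      (G : Fin (N ^ 2 - 1) → Matrix (Fin N) (Fin N) ℂ)
      (lam : Fin (N ^ 2 - 1) → ℝ) (lamLast : ℝ),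
      (∀ A, L A = A * Kᴴ + K * A + ∑ p, (lam p : ℂ) • (G p * A * (G p)ᴴ)) ∧
      K.trace = (lamLast / 2 : ℝ) ∧
      (∀ p, (G p).trace = 0) ∧
      (∀ p q, ((G p)ᴴ * G q).trace = if p = q then 1 else 0) := by
  classical
  set c' : Matrix (Fin (N ^ 2 - 1)) (Fin (N ^ 2 - 1)) ℂ :=
    Matrix.of (fun p q => c (some p) (some q)) with hc'
  have hH : c'.IsHermitian := by
    ext p q
    rw [Matrix.conjTranspose_apply]
    exact hherm (some q) (some p)
  set U : Matrix (Fin (N ^ 2 - 1)) (Fin (N ^ 2 - 1)) ℂ :=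
    (hH.eigenvectorUnitary : Matrix (Fin (N ^ 2 - 1)) (Fin (N ^ 2 - 1)) ℂ) with hU
  set lam : Fin (N ^ 2 - 1) → ℝ := hH.eigenvalues with hlam
  have hc'entry : ∀ p q, c (some p) (some q) = ∑ r, ((lam r : ℝ) : ℂ) * (U p r * conj (U q r)) := by
    intro p q
    have : c' p q = ∑ r, ((lam r : ℝ) : ℂ) * (U p r * conj (U q r)) := by
      conv_lhs => rw [hH.spectral_theorem]
      rw [Unitary.conjStarAlgAut_apply, Matrix.mul_apply]
      refine Finset.sum_congr rfl fun r _ => ?_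
      rw [Matrix.mul_diagonal, Matrix.star_apply]
      simp only [Function.comp_apply, starRingEnd_apply]
      rw [show (RCLike.ofReal (hH.eigenvalues r) : ℂ) = ((hH.eigenvalues r : ℝ) : ℂ) from rfl]
      ring
    exact this
  have hUorth : ∀ r s, ∑ p, conj (U p r) * U p s = if r = s then 1 else 0 := by
    intro r s
    have h1 : star U * U = 1 := Matrix.UnitaryGroup.star_mul_self _
    have h2 := congrFun (congrFun h1 r) s
    rw [Matrix.mul_apply] at h2
    simp only [Matrix.star_apply] at h2
    rw [Matrix.one_apply] at h2
    simp only [starRingEnd_apply]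
    exact h2
  set G : Fin (N ^ 2 - 1) → Matrix (Fin N) (Fin N) ℂ :=
    fun r => ∑ p, U p r • F (some p) with hG
  have hGH : ∀ r, (G r)ᴴ = ∑ p, conj (U p r) • (F (some p))ᴴ := by
    intro r
    rw [hG]
    simp only
    rw [Matrix.conjTranspose_sum]
    simp_rw [Matrix.conjTranspose_smul]
    rfl
  have hc0 : conj (c none none) = c none none := hherm none none
  have hc0re : c none none = ((c none none).re : ℂ) := (Complex.conj_eq_iff_re.mp hc0).symm
  set γ : ℂ := (α : ℂ) ^ 2 * c none none / 2 with hγ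
  have hγconj : conj γ = γ := by
    rw [hγ]
    rw [map_div₀, _root_.map_mul, map_pow, Complex.conj_ofReal, hc0]
    norm_num [map_ofNat]
  set K : Matrix (Fin N) (Fin N) ℂ :=
    (α : ℂ) • (∑ p, c (some p) none • F (some p)) + γ • 1 with hK
  refine ⟨K, G, lam, (c none none).re, ?_, ?_, ?_, ?_⟩
  · -- the formula
    have hFnoneH : (F none)ᴴ = (α : ℂ) • 1 := by
      rw [hFnone, Matrix.conjTranspose_smul, Matrix.conjTranspose_one, Complex.star_def,
        Complex.conj_ofReal]
    have hsplit : ∀ A, L A = c none none • (F none * A * (F none)ᴴ)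
        + (∑ q, c none (some q) • (F none * A * (F (some q))ᴴ))
        + ((∑ p, c (some p) none • (F (some p) * A * (F none)ᴴ))
        + (∑ p, ∑ q, c (some p) (some q) • (F (some p) * A * (F (some q))ᴴ))) := by
      intro A
      rw [hform A, Fintype.sum_option]
      congr 1
      · rw [Fintype.sum_option]
      · simp_rw [Fintype.sum_option]
        rw [Finset.sum_add_distrib]
    have hKH : Kᴴ = (α : ℂ) • (∑ p, c none (some p) • (F (some p))ᴴ) + γ • 1 := by
      rw [hK, Matrix.conjTranspose_add, Matrix.conjTranspose_smul, Matrix.conjTranspose_smul,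
        Matrix.conjTranspose_one, Matrix.conjTranspose_sum]
      simp_rw [Matrix.conjTranspose_smul]
      rw [Complex.star_def, Complex.conj_ofReal]
      congr 1
      · refine congrArg _ (Finset.sum_congr rfl fun p _ => ?_)
        rw [hherm]
      · rw [hγconj]
    have hAK : ∀ A, A * Kᴴ
        = (∑ q, c none (some q) • (F none * A * (F (some q))ᴴ)) + γ • A := by
      intro A
      rw [hKH, Matrix.mul_add, mul_smul_comm, mul_smul_comm, mul_one, Matrix.mul_sum]
      congr 1
      rw [Finset.smul_sum]
      refine Finset.sum_congr rfl fun q _ => ?_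
      rw [hFnone]
      simp only [mul_smul_comm, smul_mul_assoc, one_mul, smul_smul]
      rw [mul_comm]
    have hKA : ∀ A, K * A
        = (∑ p, c (some p) none • (F (some p) * A * (F none)ᴴ)) + γ • A := by
      intro A
      rw [hK, Matrix.add_mul, smul_mul_assoc, smul_mul_assoc, one_mul, Matrix.sum_mul]
      congr 1
      rw [Finset.smul_sum]
      refine Finset.sum_congr rfl fun p _ => ?_
      rw [hFnoneH]
      simp only [smul_mul_assoc, mul_smul_comm, mul_one, smul_smul]
      rw [mul_comm]
    have hnn : ∀ A, c none none • (F none * A * (F none)ᴴ) = γ • A + γ • A := by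
      intro A
      rw [hFnoneH, hFnone]
      simp only [smul_mul_assoc, mul_smul_comm, one_mul, mul_one]
      rw [smul_smul, smul_smul, ← add_smul]
      congr 1
      rw [hγ]
      ring
    have hGAG : ∀ r A, G r * A * (G r)ᴴ
        = ∑ p, ∑ q, (U p r * conj (U q r)) • (F (some p) * A * (F (some q))ᴴ) := by
      intro r A
      rw [hGH]
      simp only [hG]
      simp only [Matrix.sum_mul, Matrix.mul_sum, smul_mul_assoc, mul_smul_comm, smul_smul]
      simp_rw [Finset.smul_sum, smul_smul]
      rw [Finset.sum_comm]
      exact Finset.sum_congr rfl fun p _ => Finset.sum_congr rfl fun q _ => by rw [mul_comm]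
    have h4 : ∀ A, (∑ p, ∑ q, c (some p) (some q) • (F (some p) * A * (F (some q))ᴴ))
        = ∑ r, ((lam r : ℝ) : ℂ) • (G r * A * (G r)ᴴ) := by
      intro A
      simp_rw [hGAG, Finset.smul_sum, smul_smul]
      simp_rw [hc'entry, Finset.sum_smul]
      have e1 : ∀ p : Fin (N ^ 2 - 1),
          (∑ q, ∑ r, (((lam r : ℝ) : ℂ) * (U p r * conj (U q r)))
            • (F (some p) * A * (F (some q))ᴴ))
          = ∑ r, ∑ q, (((lam r : ℝ) : ℂ) * (U p r * conj (U q r)))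
            • (F (some p) * A * (F (some q))ᴴ) := fun p => Finset.sum_comm
      simp_rw [e1]
      exact Finset.sum_comm
    intro A
    rw [hsplit A, hAK A, hKA A, ← h4 A, hnn A]
    abel
  · -- trace of K
    rw [hK, Matrix.trace_add, Matrix.trace_smul, Matrix.trace_smul, Matrix.trace_sum]
    simp_rw [Matrix.trace_smul, hFtr, smul_zero]
    rw [Finset.sum_const_zero, smul_zero, zero_add, Matrix.trace_one]
    rw [hγ, smul_eq_mul]
    rw [hc0re]
    push_cast
    have hα2' : (α : ℂ) ^ 2 * N = 1 := hα2
    field_simp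
    simp only [Fintype.card_fin]
    linear_combination (((c none none).re : ℂ)) * hα2'
  · -- trace of G = 0
    intro p
    rw [hG]
    simp only
    rw [Matrix.trace_sum]
    simp_rw [Matrix.trace_smul, hFtr, smul_zero, Finset.sum_const_zero]
  · -- orthonormality of G
    intro p q
    rw [hGH, hG]
    simp only
    rw [Matrix.sum_mul]
    simp_rw [Matrix.mul_sum, smul_mul_assoc, mul_smul_comm, smul_smul]
    rw [Matrix.trace_sum]
    simp_rw [Matrix.trace_sum, Matrix.trace_smul, hFon, Option.some.injEq, smul_eq_mul,
      mul_ite, mul_one, mul_zero]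
    simp_rw [Finset.sum_ite_eq, Finset.mem_univ, if_true]
    exact hUorth p q


/-- If `L : M_N(ℂ) → M_N(ℂ)` is linear with `L(A*) = L(A)*`, then
`L(A) = AK* + KA + ∑_p λ_p G_p A G_p*` with `tr(K) = λ_{N²}/2`,
`tr(G_p) = 0` and `tr(G_p* G_q) = δ_{pq}`. -/
theorem stmt6 (N : ℕ) (hN : 0 < N)
    (L : Matrix (Fin N) (Fin N) ℂ →ₗ[ℂ] Matrix (Fin N) (Fin N) ℂ)
    (hstar : ∀ A, L Aᴴ = (L A)ᴴ) :
    ∃ (K : Matrix (Fin N) (Fin N) ℂ)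
      (G : Fin (N ^ 2 - 1) → Matrix (Fin N) (Fin N) ℂ)
      (lam : Fin (N ^ 2 - 1) → ℝ) (lamLast : ℝ),
      (∀ A, L A = A * Kᴴ + K * A + ∑ p, (lam p : ℂ) • (G p * A * (G p)ᴴ)) ∧
      K.trace = (lamLast / 2 : ℝ) ∧
      (∀ p, (G p).trace = 0) ∧
      (∀ p q, ((G p)ᴴ * G q).trace = if p = q then 1 else 0) := by
  obtain ⟨F, ⟨α, hαpos, hα2, hFnone⟩, hFtr, hFon, hFcomp⟩ := auxA N hN
  obtain ⟨c, hherm, hform⟩ := auxB L hstar F hFcomp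
  exact stmt6' N hN L hstar F α hαpos hα2 hFnone hFtr hFon c hherm hform
end

section
/- Let L: M_N(ℂ) → M_N(ℂ) be a linear map such that L(A*) = L(A)* and tr(L(A)) = 0 for all A ∈ M_N(ℂ). Then there exist a self-adjoint H ∈ M_N(ℂ) with tr(H) = 0, matrices G_1,…,G_{N²−1} ∈ M_N(ℂ) with tr(G_p) = 0 and tr(G_p*G_q) = δ_{pq}, and real scalars λ_1,…,λ_{N²−1}, such that L(A) = −i[H,A] + (1/2)∑_{p=1}^{N²−1} λ_p([G_p, A G_p*] + [G_p A, G_p*]) for all A ∈ M_N(ℂ). -/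
open Matrix BigOperators

lemma gksl_spec {ι : Type*} [Fintype ι] [DecidableEq ι] (c : Matrix ι ι ℂ)
    (hc : c.IsHermitian) :
    ∃ (V : Matrix ι ι ℂ) (μ : ι → ℝ), star V * V = 1 ∧ V * star V = 1 ∧
      ∀ k l, c k l = ∑ m, (μ m : ℂ) * (V k m * star (V l m)) := by
  refine ⟨hc.eigenvectorUnitary, hc.eigenvalues, ?_, ?_, ?_⟩
  · exact (Matrix.mem_unitaryGroup_iff').mp hc.eigenvectorUnitary.2
  · exact (Matrix.mem_unitaryGroup_iff).mp hc.eigenvectorUnitary.2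
  · intro k l
    conv_lhs => rw [hc.spectral_theorem]
    simp [Matrix.mul_apply, Matrix.diagonal, Finset.sum_ite_eq, conjTranspose_apply,
      mul_comm, mul_assoc, mul_left_comm]

lemma gksl_sum_split {n : ℕ} (hn : 0 < n) {M : Type*} [AddCommMonoid M] (f : Fin n → M) :
    ∑ k, f k = f ⟨0, hn⟩ + ∑ p : Fin (n - 1), f ⟨p.1 + 1, by omega⟩ := by
  have h : n - 1 + 1 = n := by omega
  rw [← (finCongr h).sum_comp f, Fin.sum_univ_succ]
  congr 1

lemma gksl_diag_form {n : Type*} [Fintype n] [DecidableEq n] {ι κ : Type*} [Fintype ι] [Fintype κ]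
    (μ : ι → ℝ) (V : κ → ι → ℂ) (F : κ → Matrix n n ℂ) (A : Matrix n n ℂ) :
    ∑ k, ∑ l, (∑ m, (μ m : ℂ) * (V k m * star (V l m))) • (F k * A * (F l)ᴴ)
      = ∑ m, (μ m : ℂ) • ((∑ k, V k m • F k) * A * (∑ l, V l m • F l)ᴴ) := by
  have h1 : ∀ m, (∑ l, V l m • F l)ᴴ = ∑ l, star (V l m) • (F l)ᴴ := by
    intro m; rw [conjTranspose_sum]
    exact Finset.sum_congr rfl fun l _ => conjTranspose_smul _ _
  calc ∑ k, ∑ l, (∑ m, (μ m : ℂ) * (V k m * star (V l m))) • (F k * A * (F l)ᴴ)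
      = ∑ k, ∑ l, ∑ m, ((μ m : ℂ) * (V k m * star (V l m))) • (F k * A * (F l)ᴴ) := by
        simp [Finset.sum_smul]
    _ = ∑ k, ∑ m, ∑ l, ((μ m : ℂ) * (V k m * star (V l m))) • (F k * A * (F l)ᴴ) :=
        Finset.sum_congr rfl fun k _ => Finset.sum_comm
    _ = ∑ m, ∑ k, ∑ l, ((μ m : ℂ) * (V k m * star (V l m))) • (F k * A * (F l)ᴴ) :=
        Finset.sum_comm
    _ = ∑ m, (μ m : ℂ) • ((∑ k, V k m • F k) * A * (∑ l, V l m • F l)ᴴ) := by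
        refine Finset.sum_congr rfl fun m _ => ?_
        rw [h1, Finset.sum_mul, Finset.sum_mul, Finset.smul_sum]
        refine Finset.sum_congr rfl fun k _ => ?_
        rw [Finset.mul_sum, Finset.smul_sum]
        refine Finset.sum_congr rfl fun l _ => ?_
        rw [smul_mul_assoc, smul_mul_assoc, mul_smul_comm, smul_smul, smul_smul]
        congr 1
        ring

lemma gksl_diag_form2 {n : Type*} [Fintype n] [DecidableEq n] {ι κ : Type*} [Fintype ι] [Fintype κ]
    (μ : ι → ℝ) (V : κ → ι → ℂ) (F : κ → Matrix n n ℂ) :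
    ∑ k, ∑ l, (∑ m, (μ m : ℂ) * (V k m * star (V l m))) • ((F l)ᴴ * F k)
      = ∑ m, (μ m : ℂ) • ((∑ l, V l m • F l)ᴴ * (∑ k, V k m • F k)) := by
  have h1 : ∀ m, (∑ l, V l m • F l)ᴴ = ∑ l, star (V l m) • (F l)ᴴ := by
    intro m; rw [conjTranspose_sum]
    exact Finset.sum_congr rfl fun l _ => conjTranspose_smul _ _
  calc ∑ k, ∑ l, (∑ m, (μ m : ℂ) * (V k m * star (V l m))) • ((F l)ᴴ * F k)
      = ∑ k, ∑ l, ∑ m, ((μ m : ℂ) * (V k m * star (V l m))) • ((F l)ᴴ * F k) := by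
        simp [Finset.sum_smul]
    _ = ∑ k, ∑ m, ∑ l, ((μ m : ℂ) * (V k m * star (V l m))) • ((F l)ᴴ * F k) :=
        Finset.sum_congr rfl fun k _ => Finset.sum_comm
    _ = ∑ m, ∑ k, ∑ l, ((μ m : ℂ) * (V k m * star (V l m))) • ((F l)ᴴ * F k) :=
        Finset.sum_comm
    _ = ∑ m, ∑ l, ∑ k, ((μ m : ℂ) * (V k m * star (V l m))) • ((F l)ᴴ * F k) :=
        Finset.sum_congr rfl fun m _ => Finset.sum_comm
    _ = ∑ m, (μ m : ℂ) • ((∑ l, V l m • F l)ᴴ * (∑ k, V k m • F k)) := by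
        refine Finset.sum_congr rfl fun m _ => ?_
        rw [h1, Finset.sum_mul, Finset.smul_sum]
        refine Finset.sum_congr rfl fun l _ => ?_
        rw [Finset.mul_sum, Finset.smul_sum]
        refine Finset.sum_congr rfl fun k _ => ?_
        rw [smul_mul_assoc, mul_smul_comm, smul_smul, smul_smul]
        congr 1
        ring


variable {N : ℕ}

/-- The coefficient matrix of `L` in the basis `F`. -/
noncomputable def gkslC (N : ℕ) (L : Matrix (Fin N) (Fin N) ℂ →ₗ[ℂ] Matrix (Fin N) (Fin N) ℂ)
    (F : Fin (N ^ 2) → Matrix (Fin N) (Fin N) ℂ) :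
    Matrix (Fin (N ^ 2)) (Fin (N ^ 2)) ℂ :=
  Matrix.of fun k l => ∑ x : (Fin N × Fin N) × Fin N × Fin N,
    star (F k x.2.1 x.1.1) * L (Matrix.single x.1.1 x.1.2 1) x.2.1 x.2.2 * F l x.2.2 x.1.2

lemma gkslC_herm (L : Matrix (Fin N) (Fin N) ℂ →ₗ[ℂ] Matrix (Fin N) (Fin N) ℂ)
    (hstar : ∀ A, L Aᴴ = (L A)ᴴ)
    (F : Fin (N ^ 2) → Matrix (Fin N) (Fin N) ℂ) : (gkslC N L F).IsHermitian := by
  have hEbH : ∀ a b : Fin N, (Matrix.single a b (1 : ℂ))ᴴ = Matrix.single b a 1 := by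
    intro a b
    ext i j
    simp only [conjTranspose_apply, Matrix.single, Matrix.of_apply]
    by_cases h : a = j ∧ b = i
    · simp [h.1, h.2]
    · rw [if_neg h, if_neg (by tauto), star_zero]
  have hstar' : ∀ (a b : Fin N) (i j : Fin N),
      star (L (Matrix.single a b 1) i j) = L (Matrix.single b a 1) j i := by
    intro a b i j
    rw [← conjTranspose_apply, ← hstar, hEbH]
  ext k l
  simp only [conjTranspose_apply, gkslC, Matrix.of_apply, star_sum]
  refine Fintype.sum_equiv
    (Equiv.prodCongr (Equiv.prodComm (Fin N) (Fin N)) (Equiv.prodComm (Fin N) (Fin N)))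
    _ _ (fun x => ?_)
  simp only [Equiv.prodCongr_apply, Equiv.prodComm_apply, Prod.map, Prod.fst_swap, Prod.snd_swap]
  simp only [star_mul', star_star, hstar']
  ring

lemma gkslC_expand (hN : 0 < N)
    (L : Matrix (Fin N) (Fin N) ℂ →ₗ[ℂ] Matrix (Fin N) (Fin N) ℂ)
    (F : Fin (N ^ 2) → Matrix (Fin N) (Fin N) ℂ)
    (hcomp : ∀ i a j b : Fin N, ∑ k, F k i a * star (F k j b) =
      if i = j ∧ a = b then 1 else 0)
    (A : Matrix (Fin N) (Fin N) ℂ) :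
    L A = ∑ k, ∑ l, gkslC N L F k l • (F k * A * (F l)ᴴ) := by
  ext i j
  have hLA : L A i j = ∑ a, ∑ b, A a b * L (Matrix.single a b 1) i j := by
    conv_lhs => rw [matrix_eq_sum_single A]
    rw [map_sum]
    rw [Matrix.sum_apply]
    refine Finset.sum_congr rfl fun a _ => ?_
    rw [map_sum, Matrix.sum_apply]
    refine Finset.sum_congr rfl fun b _ => ?_
    have hsb : Matrix.single a b (A a b) = A a b • Matrix.single a b (1 : ℂ) := by
      rw [smul_single, smul_eq_mul, mul_one]
    rw [hsb, LinearMap.map_smul]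
    simp [smul_eq_mul]
  have hprod : ∀ k l, (F k * A * (F l)ᴴ) i j
      = ∑ y : Fin N × Fin N, F k i y.1 * A y.1 y.2 * star (F l j y.2) := by
    intro k l
    rw [Matrix.mul_apply, Fintype.sum_prod_type]
    rw [Finset.sum_comm]
    refine Finset.sum_congr rfl fun t _ => ?_
    rw [Matrix.mul_apply, Finset.sum_mul]
    refine Finset.sum_congr rfl fun s _ => ?_
    rw [conjTranspose_apply]
  rw [Matrix.sum_apply]
  simp only [Matrix.sum_apply, Matrix.smul_apply, smul_eq_mul]
  symm
  calc ∑ k, ∑ l, gkslC N L F k l * (F k * A * (F l)ᴴ) i j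
      = ∑ z : Fin (N ^ 2) × Fin (N ^ 2), gkslC N L F z.1 z.2 * (F z.1 * A * (F z.2)ᴴ) i j := by
        rw [Fintype.sum_prod_type]
    _ = ∑ z : Fin (N ^ 2) × Fin (N ^ 2), ∑ x : (Fin N × Fin N) × Fin N × Fin N,
          ∑ y : Fin N × Fin N,
          (star (F z.1 x.2.1 x.1.1) * L (Matrix.single x.1.1 x.1.2 1) x.2.1 x.2.2
            * F z.2 x.2.2 x.1.2) * (F z.1 i y.1 * A y.1 y.2 * star (F z.2 j y.2)) := by
        refine Finset.sum_congr rfl fun z _ => ?_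
        rw [hprod, gkslC, Matrix.of_apply, Finset.sum_mul]
        exact Finset.sum_congr rfl fun x _ => Finset.mul_sum _ _ _
    _ = ∑ x : (Fin N × Fin N) × Fin N × Fin N, ∑ y : Fin N × Fin N,
          ∑ z : Fin (N ^ 2) × Fin (N ^ 2),
          (star (F z.1 x.2.1 x.1.1) * L (Matrix.single x.1.1 x.1.2 1) x.2.1 x.2.2
            * F z.2 x.2.2 x.1.2) * (F z.1 i y.1 * A y.1 y.2 * star (F z.2 j y.2)) := by
        rw [Finset.sum_comm]
        exact Finset.sum_congr rfl fun x _ => Finset.sum_comm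
    _ = ∑ x : (Fin N × Fin N) × Fin N × Fin N, ∑ y : Fin N × Fin N,
          L (Matrix.single x.1.1 x.1.2 1) x.2.1 x.2.2 * A y.1 y.2 *
          ((∑ k, F k i y.1 * star (F k x.2.1 x.1.1)) *
           (∑ l, F l x.2.2 x.1.2 * star (F l j y.2))) := by
        refine Finset.sum_congr rfl fun x _ => Finset.sum_congr rfl fun y _ => ?_
        rw [Fintype.sum_prod_type, Finset.sum_mul_sum]
        rw [Finset.mul_sum]
        refine Finset.sum_congr rfl fun k _ => ?_
        rw [Finset.mul_sum]
        refine Finset.sum_congr rfl fun l _ => ?_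
        ring
    _ = ∑ x : (Fin N × Fin N) × Fin N × Fin N, ∑ y : Fin N × Fin N,
          L (Matrix.single x.1.1 x.1.2 1) x.2.1 x.2.2 * A y.1 y.2 *
          ((if i = x.2.1 ∧ y.1 = x.1.1 then 1 else 0) *
           (if x.2.2 = j ∧ x.1.2 = y.2 then 1 else 0)) := by
        refine Finset.sum_congr rfl fun x _ => Finset.sum_congr rfl fun y _ => ?_
        rw [hcomp i y.1 x.2.1 x.1.1, hcomp x.2.2 x.1.2 j y.2]
    _ = ∑ a, ∑ b, A a b * L (Matrix.single a b 1) i j := by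
        rw [Fintype.sum_prod_type]
        simp only [Fintype.sum_prod_type]
        simp only [mul_ite, mul_one, mul_zero, ite_and, Finset.sum_ite_eq,
          Finset.sum_ite_eq', Finset.mem_univ, if_true, Finset.sum_ite_irrel,
          Finset.sum_const_zero]
        refine Finset.sum_congr rfl fun a _ => Finset.sum_congr rfl fun b _ => by ring
    _ = L A i j := hLA.symm


lemma gksl_main (N : ℕ) (hN : 0 < N) (hn2 : 0 < N ^ 2)
    (L : Matrix (Fin N) (Fin N) ℂ →ₗ[ℂ] Matrix (Fin N) (Fin N) ℂ)
    (hstar : ∀ A, L Aᴴ = (L A)ᴴ)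
    (htr : ∀ A, (L A).trace = 0)
    (F : Fin (N ^ 2) → Matrix (Fin N) (Fin N) ℂ)
    (hF0 : F ⟨0, hn2⟩ = ((Real.sqrt N : ℂ))⁻¹ • 1)
    (horth : ∀ k l, ((F k)ᴴ * F l).trace = if k = l then 1 else 0)
    (hcomp : ∀ i a j b : Fin N, ∑ k, F k i a * star (F k j b) =
      if i = j ∧ a = b then 1 else 0) :
    ∃ (H : Matrix (Fin N) (Fin N) ℂ)
      (G : Fin (N ^ 2 - 1) → Matrix (Fin N) (Fin N) ℂ)
      (lam : Fin (N ^ 2 - 1) → ℝ),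
      H.IsHermitian ∧ H.trace = 0 ∧
      (∀ p, (G p).trace = 0) ∧
      (∀ p q, ((G p)ᴴ * G q).trace = if p = q then 1 else 0) ∧
      (∀ A, L A = -Complex.I • (H * A - A * H) +
        (1 / 2 : ℂ) • ∑ p, (lam p : ℂ) •
          ((G p * (A * (G p)ᴴ) - A * (G p)ᴴ * G p) +
           (G p * A * (G p)ᴴ - (G p)ᴴ * (G p * A)))) := by
  classical
  obtain ⟨V, μ, hVl, hVr, hspec⟩ := gksl_spec _ (gkslC_herm L hstar F)
  have hι : ∀ p : Fin (N ^ 2 - 1), p.1 + 1 < N ^ 2 := fun p => by have := p.2; omega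
  set ι : Fin (N ^ 2 - 1) → Fin (N ^ 2) := fun p => ⟨p.1 + 1, hι p⟩ with hιdef
  set k0 : Fin (N ^ 2) := ⟨0, hn2⟩ with hk0
  -- basic facts about F
  have hsq : ((Real.sqrt N : ℂ))⁻¹ ≠ 0 := by
    rw [ne_eq, inv_eq_zero, Complex.ofReal_eq_zero]
    exact ne_of_gt (Real.sqrt_pos.mpr (by exact_mod_cast hN))
  have hstarsq : star ((Real.sqrt N : ℂ))⁻¹ = ((Real.sqrt N : ℂ))⁻¹ := by
    simp [Complex.star_def, ← Complex.ofReal_inv, Complex.conj_ofReal]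
  have hF0H : (F k0)ᴴ = ((Real.sqrt N : ℂ))⁻¹ • 1 := by
    rw [hF0, conjTranspose_smul, conjTranspose_one, hstarsq]
  have htrF : ∀ p, (F (ι p)).trace = 0 := by
    intro p
    have h := horth k0 (ι p)
    rw [if_neg (by
      intro h0
      have := congrArg Fin.val h0
      simp [hk0, hιdef] at this)] at h
    rw [hF0H, smul_mul_assoc, one_mul, trace_smul, smul_eq_mul] at h
    exact (mul_eq_zero.mp h).resolve_left hsq
  -- first splitting
  set S : Fin (N ^ 2) → Matrix (Fin N) (Fin N) ℂ := fun m => ∑ k, V k m • F k with hSdef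
  set W : Fin (N ^ 2) → Matrix (Fin N) (Fin N) ℂ :=
    fun m => ∑ p, V (ι p) m • F (ι p) with hWdef
  set β : Fin (N ^ 2) → ℂ := fun m => V k0 m * ((Real.sqrt N : ℂ))⁻¹ with hβdef
  have hLS : ∀ A, L A = ∑ m, (μ m : ℂ) • (S m * A * (S m)ᴴ) := by
    intro A
    rw [gkslC_expand hN L F hcomp A]
    calc ∑ k, ∑ l, gkslC N L F k l • (F k * A * (F l)ᴴ)
        = ∑ k, ∑ l, (∑ m, (μ m : ℂ) * (V k m * star (V l m))) • (F k * A * (F l)ᴴ) := by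
          refine Finset.sum_congr rfl fun k _ => Finset.sum_congr rfl fun l _ => ?_
          rw [hspec k l]
      _ = ∑ m, (μ m : ℂ) • (S m * A * (S m)ᴴ) := gksl_diag_form μ (fun k m => V k m) F A
  have hWtr : ∀ m, (W m).trace = 0 := by
    intro m
    rw [hWdef]
    simp [trace_sum, trace_smul, htrF]
  have hS : ∀ m, S m = β m • 1 + W m := by
    intro m
    calc S m = V k0 m • F k0 + W m := gksl_sum_split hn2 (fun k => V k m • F k)
      _ = β m • 1 + W m := by rw [hF0, smul_smul]
  have hμreal : ∀ m, star ((μ m : ℝ) : ℂ) = ((μ m : ℝ) : ℂ) := fun m => by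
    rw [Complex.star_def, Complex.conj_ofReal]
  set c₀ : ℂ := ∑ m, (μ m : ℂ) * (β m * star (β m)) with hc₀def
  set B : Matrix (Fin N) (Fin N) ℂ := ∑ m, ((μ m : ℂ) * star (β m)) • W m with hBdef
  have hBH : Bᴴ = ∑ m, ((μ m : ℂ) * β m) • (W m)ᴴ := by
    rw [hBdef, conjTranspose_sum]
    refine Finset.sum_congr rfl fun m _ => ?_
    rw [conjTranspose_smul, star_mul', hμreal, star_star, mul_comm]
  set Φ : Matrix (Fin N) (Fin N) ℂ → Matrix (Fin N) (Fin N) ℂ :=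
    fun A => ∑ m, (μ m : ℂ) • (W m * A * (W m)ᴴ) with hΦdef
  have hL2 : ∀ A, L A = c₀ • A + (B * A + (A * Bᴴ + Φ A)) := by
    intro A
    rw [hLS A]
    have hterm : ∀ m, (μ m : ℂ) • (S m * A * (S m)ᴴ)
        = ((μ m : ℂ) * (β m * star (β m))) • A
          + ((((μ m : ℂ) * star (β m)) • W m) * A
          + (A * (((μ m : ℂ) * β m) • (W m)ᴴ)
          + (μ m : ℂ) • (W m * A * (W m)ᴴ))) := by
      intro m
      rw [hS m, conjTranspose_add, conjTranspose_smul, conjTranspose_one]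
      simp only [add_mul, mul_add, smul_mul_assoc, mul_smul_comm, one_mul, mul_one,
        smul_add, smul_smul]
      module
    calc ∑ m, (μ m : ℂ) • (S m * A * (S m)ᴴ)
        = ∑ m, (((μ m : ℂ) * (β m * star (β m))) • A
          + ((((μ m : ℂ) * star (β m)) • W m) * A
          + (A * (((μ m : ℂ) * β m) • (W m)ᴴ)
          + (μ m : ℂ) • (W m * A * (W m)ᴴ)))) := Finset.sum_congr rfl fun m _ => hterm m
      _ = c₀ • A + (B * A + (A * Bᴴ + Φ A)) := by
          rw [Finset.sum_add_distrib, Finset.sum_add_distrib, Finset.sum_add_distrib]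
          congr 1
          · rw [← Finset.sum_smul]
          congr 1
          · rw [hBdef, Finset.sum_mul]
          congr 1
          · rw [hBH, Finset.mul_sum]
  have hc₀r : star c₀ = c₀ := by
    rw [hc₀def, star_sum]
    refine Finset.sum_congr rfl fun m _ => ?_
    rw [star_mul', star_mul', star_star, hμreal]
    ring
  set C : Matrix (Fin N) (Fin N) ℂ := B + (c₀ / 2) • 1 with hCdef
  have hCH : Cᴴ = Bᴴ + (c₀ / 2) • 1 := by
    rw [hCdef, conjTranspose_add, conjTranspose_smul, conjTranspose_one]
    congr 2
    rw [star_div₀, hc₀r]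
    norm_num
  have hL3 : ∀ A, L A = C * A + A * Cᴴ + Φ A := by
    intro A
    rw [hL2 A, hCdef, hCH]
    rw [add_mul, mul_add, smul_mul_assoc, one_mul, mul_smul_comm, mul_one]
    have h2 : (c₀ / 2) • A + (c₀ / 2) • A = c₀ • A := by
      rw [← add_smul]
      norm_num
    rw [← h2]
    abel
  set H : Matrix (Fin N) (Fin N) ℂ := (Complex.I / 2) • (C - Cᴴ) with hHdef
  have hHherm : H.IsHermitian := by
    have h1 : star (Complex.I / 2) = -(Complex.I / 2) := by
      simp [Complex.star_def, map_div₀, Complex.conj_I]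
      ring
    show Hᴴ = H
    rw [hHdef, conjTranspose_smul, conjTranspose_sub, conjTranspose_conjTranspose, h1,
      neg_smul, ← smul_neg, neg_sub]
  have htrB : B.trace = 0 := by
    rw [hBdef]
    simp [trace_sum, trace_smul, hWtr]
  have htrC : C.trace = c₀ / 2 * N := by
    rw [hCdef, trace_add, trace_smul, trace_one, htrB]
    simp [smul_eq_mul]
  have htrCH : Cᴴ.trace = c₀ / 2 * N := by
    rw [trace_conjTranspose, htrC, star_mul', star_div₀, hc₀r]
    norm_num
  have htrH : H.trace = 0 := by
    rw [hHdef, trace_smul, trace_sub, htrC, htrCH]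
    simp
  set Q : Matrix (Fin N) (Fin N) ℂ := ∑ m, (μ m : ℂ) • ((W m)ᴴ * W m) with hQdef
  have hEntry : ∀ (M : Matrix (Fin N) (Fin N) ℂ) (a b : Fin N),
      (M * Matrix.single b a 1).trace = M a b := by
    intro M a b
    rw [trace]
    simp only [diag_apply, mul_apply, Matrix.single, Matrix.of_apply, mul_ite, mul_one,
      mul_zero, ite_and]
    simp [Finset.sum_ite_eq, Finset.sum_ite_eq', Finset.mem_univ]
  have hM0 : C + Cᴴ + Q = 0 := by
    have htrall : ∀ A, ((C + Cᴴ + Q) * A).trace = 0 := by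
      intro A
      have h0 := htr A
      rw [hL3 A] at h0
      have h1 : (A * Cᴴ).trace = (Cᴴ * A).trace := trace_mul_comm A Cᴴ
      have h2 : (Φ A).trace = (Q * A).trace := by
        have e1 : (Φ A).trace = ∑ m, (μ m : ℂ) * (W m * A * (W m)ᴴ).trace := by
          rw [hΦdef]
          simp [trace_sum, trace_smul]
        have e2 : (Q * A).trace = ∑ m, (μ m : ℂ) * ((W m)ᴴ * W m * A).trace := by
          rw [hQdef, Finset.sum_mul, trace_sum]
          refine Finset.sum_congr rfl fun m _ => ?_
          rw [smul_mul_assoc, trace_smul, smul_eq_mul]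
        rw [e1, e2]
        refine Finset.sum_congr rfl fun m _ => ?_
        rw [trace_mul_comm (W m * A) ((W m)ᴴ), ← mul_assoc]
      rw [trace_add, trace_add, h1, h2] at h0
      rw [add_mul, add_mul, trace_add, trace_add]
      linear_combination h0
    ext a b
    have h3 := htrall (Matrix.single b a 1)
    rw [hEntry] at h3
    simpa using h3
  have hQ' : Q = -(C + Cᴴ) := by
    have := hM0
    rw [add_eq_zero_iff_eq_neg] at this
    rw [this, neg_neg]
  have hL4 : ∀ A, L A = -Complex.I • (H * A - A * H)
      + (Φ A - (1 / 2 : ℂ) • (Q * A + A * Q)) := by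
    intro A
    rw [hL3 A]
    have hcoef : -Complex.I * (Complex.I / 2) = (1 / 2 : ℂ) := by
      have := Complex.I_mul_I
      linear_combination (-(1 : ℂ) / 2) * this
    have hS2 : (Complex.I / 2) • (C - Cᴴ) * A - A * ((Complex.I / 2) • (C - Cᴴ))
        = (Complex.I / 2) • ((C - Cᴴ) * A - A * (C - Cᴴ)) := by
      rw [smul_mul_assoc, mul_smul_comm, smul_sub]
    rw [hHdef, hS2, smul_smul, hcoef, hQ']
    simp only [sub_mul, mul_sub, neg_mul, mul_neg, add_mul, mul_add, smul_sub, smul_add,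
      smul_neg, neg_add, neg_neg, neg_sub]
    module
  -- second diagonalization
  set d : Matrix (Fin (N ^ 2 - 1)) (Fin (N ^ 2 - 1)) ℂ :=
    Matrix.of fun p q => ∑ m, (μ m : ℂ) * (V (ι p) m * star (V (ι q) m)) with hddef
  have hdh : d.IsHermitian := by
    ext p q
    simp only [conjTranspose_apply, hddef, Matrix.of_apply, star_sum]
    refine Finset.sum_congr rfl fun m _ => ?_
    simp only [star_mul', star_star, hμreal]
    ring
  obtain ⟨u, lam, hul, hur, hdspec⟩ := gksl_spec d hdh
  set G : Fin (N ^ 2 - 1) → Matrix (Fin N) (Fin N) ℂ :=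
    fun r => ∑ p, u p r • F (ι p) with hGdef
  have hΦG : ∀ A, Φ A = ∑ r, (lam r : ℂ) • (G r * A * (G r)ᴴ) := by
    intro A
    have h1 : Φ A = ∑ p, ∑ q, d p q • (F (ι p) * A * (F (ι q))ᴴ) := by
      calc Φ A = ∑ m, (μ m : ℂ)
            • ((∑ p, V (ι p) m • F (ι p)) * A * (∑ q, V (ι q) m • F (ι q))ᴴ) := rfl
        _ = ∑ p, ∑ q, (∑ m, (μ m : ℂ) * (V (ι p) m * star (V (ι q) m)))
            • (F (ι p) * A * (F (ι q))ᴴ) :=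
            (gksl_diag_form μ (fun p m => V (ι p) m) (fun p => F (ι p)) A).symm
        _ = ∑ p, ∑ q, d p q • (F (ι p) * A * (F (ι q))ᴴ) := rfl
    rw [h1]
    calc ∑ p, ∑ q, d p q • (F (ι p) * A * (F (ι q))ᴴ)
        = ∑ p, ∑ q, (∑ r, (lam r : ℂ) * (u p r * star (u q r)))
            • (F (ι p) * A * (F (ι q))ᴴ) := by
          refine Finset.sum_congr rfl fun p _ => Finset.sum_congr rfl fun q _ => ?_
          rw [hdspec p q]
      _ = ∑ r, (lam r : ℂ) • (G r * A * (G r)ᴴ) :=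
          gksl_diag_form lam (fun p r => u p r) (fun p => F (ι p)) A
  have hQG : Q = ∑ r, (lam r : ℂ) • ((G r)ᴴ * G r) := by
    have h1 : Q = ∑ p, ∑ q, d p q • ((F (ι q))ᴴ * F (ι p)) := by
      calc Q = ∑ m, (μ m : ℂ)
            • ((∑ q, V (ι q) m • F (ι q))ᴴ * (∑ p, V (ι p) m • F (ι p))) := rfl
        _ = ∑ p, ∑ q, (∑ m, (μ m : ℂ) * (V (ι p) m * star (V (ι q) m)))
            • ((F (ι q))ᴴ * F (ι p)) :=
            (gksl_diag_form2 μ (fun p m => V (ι p) m) (fun p => F (ι p))).symm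
        _ = ∑ p, ∑ q, d p q • ((F (ι q))ᴴ * F (ι p)) := rfl
    rw [h1]
    calc ∑ p, ∑ q, d p q • ((F (ι q))ᴴ * F (ι p))
        = ∑ p, ∑ q, (∑ r, (lam r : ℂ) * (u p r * star (u q r)))
            • ((F (ι q))ᴴ * F (ι p)) := by
          refine Finset.sum_congr rfl fun p _ => Finset.sum_congr rfl fun q _ => ?_
          rw [hdspec p q]
      _ = ∑ r, (lam r : ℂ) • ((G r)ᴴ * G r) :=
          gksl_diag_form2 lam (fun p r => u p r) (fun p => F (ι p))
  have htrG : ∀ r, (G r).trace = 0 := by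
    intro r
    rw [hGdef]
    simp [trace_sum, trace_smul, htrF]
  have hGorth : ∀ r s, ((G r)ᴴ * G s).trace = if r = s then 1 else 0 := by
    intro r s
    have hGH : (G r)ᴴ = ∑ p, star (u p r) • (F (ι p))ᴴ := by
      rw [hGdef, conjTranspose_sum]
      exact Finset.sum_congr rfl fun p _ => conjTranspose_smul _ _
    calc ((G r)ᴴ * G s).trace
        = ∑ p, ∑ q, (star (u p r) * u q s) * ((F (ι p))ᴴ * F (ι q)).trace := by
          rw [hGH, hGdef, Finset.sum_mul, trace_sum]
          refine Finset.sum_congr rfl fun p _ => ?_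
          rw [Finset.mul_sum, trace_sum]
          refine Finset.sum_congr rfl fun q _ => ?_
          rw [smul_mul_assoc, mul_smul_comm, smul_smul, trace_smul, smul_eq_mul]
      _ = ∑ p, star (u p r) * u p s := by
          refine Finset.sum_congr rfl fun p _ => ?_
          calc ∑ q, (star (u p r) * u q s) * ((F (ι p))ᴴ * F (ι q)).trace
              = ∑ q, (star (u p r) * u q s) * (if p = q then 1 else 0) := by
                refine Finset.sum_congr rfl fun q _ => ?_
                rw [horth]
                congr 1
                by_cases hpq : p = q
                · simp [hpq]
                · rw [if_neg (by
                      intro hc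
                      exact hpq (Fin.ext (by
                        have := congrArg Fin.val hc
                        simp [hιdef] at this
                        exact this))), if_neg hpq]
            _ = star (u p r) * u p s := by
                simp [mul_ite, mul_one, mul_zero, Finset.sum_ite_eq, Finset.mem_univ]
      _ = (if r = s then 1 else 0) := by
          have h4 := congrFun (congrFun hul r) s
          simpa [mul_apply, star_apply, one_apply] using h4
  refine ⟨H, G, lam, hHherm, htrH, htrG, hGorth, fun A => ?_⟩
  rw [hL4 A, hΦG A, hQG]
  congr 1
  have hsum : ∀ r, (1 / 2 : ℂ) • ((lam r : ℂ) •
        ((G r * (A * (G r)ᴴ) - A * (G r)ᴴ * G r) + (G r * A * (G r)ᴴ - (G r)ᴴ * (G r * A))))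
      = (lam r : ℂ) • (G r * A * (G r)ᴴ)
        - (1 / 2 : ℂ) • (((lam r : ℂ) • ((G r)ᴴ * G r)) * A + A * ((lam r : ℂ) • ((G r)ᴴ * G r))) := by
    intro r
    simp only [smul_mul_assoc, mul_smul_comm, ← mul_assoc, smul_add, smul_sub, smul_smul]
    module
  calc (∑ r, (lam r : ℂ) • (G r * A * (G r)ᴴ))
        - (1 / 2 : ℂ) • ((∑ r, (lam r : ℂ) • ((G r)ᴴ * G r)) * A
          + A * (∑ r, (lam r : ℂ) • ((G r)ᴴ * G r)))
      = ∑ r, ((lam r : ℂ) • (G r * A * (G r)ᴴ)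
        - (1 / 2 : ℂ) • (((lam r : ℂ) • ((G r)ᴴ * G r)) * A
          + A * ((lam r : ℂ) • ((G r)ᴴ * G r)))) := by
        rw [Finset.sum_mul, Finset.mul_sum, ← Finset.sum_add_distrib, Finset.smul_sum,
          ← Finset.sum_sub_distrib]
    _ = ∑ r, (1 / 2 : ℂ) • ((lam r : ℂ) •
        ((G r * (A * (G r)ᴴ) - A * (G r)ᴴ * G r) + (G r * A * (G r)ᴴ - (G r)ᴴ * (G r * A)))) := by
        exact Finset.sum_congr rfl fun r _ => (hsum r).symm
    _ = (1 / 2 : ℂ) • ∑ r, (lam r : ℂ) •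
        ((G r * (A * (G r)ᴴ) - A * (G r)ᴴ * G r) + (G r * A * (G r)ᴴ - (G r)ᴴ * (G r * A))) := by
        rw [Finset.smul_sum]

lemma gksl_exists_F (N : ℕ) (hN : 0 < N) (hn2 : 0 < N ^ 2) :
    ∃ F : Fin (N ^ 2) → Matrix (Fin N) (Fin N) ℂ,
      (F ⟨0, hn2⟩ = ((Real.sqrt N : ℂ))⁻¹ • 1) ∧
      (∀ k l, ((F k)ᴴ * F l).trace = if k = l then 1 else 0) ∧
      (∀ i a j b : Fin N, ∑ k, F k i a * star (F k j b) =
        if i = j ∧ a = b then 1 else 0) := by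
  classical
  have hNc : (N : ℂ) ≠ 0 := Nat.cast_ne_zero.mpr hN.ne'
  set k0 : Fin (N ^ 2) := ⟨0, hn2⟩ with hk0
  set v₀ : EuclideanSpace ℂ (Fin N × Fin N) := WithLp.toLp 2 (fun x : Fin N × Fin N => if x.1 = x.2 then ((Real.sqrt N : ℂ))⁻¹ else 0) with hv₀
  have hvv : (inner ℂ v₀ v₀ : ℂ) = 1 := by
    rw [PiLp.inner_apply]
    simp only [RCLike.inner_apply']
    have hss : star ((Real.sqrt N : ℂ))⁻¹ * ((Real.sqrt N : ℂ))⁻¹ = (N : ℂ)⁻¹ := by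
      rw [← Complex.ofReal_inv, Complex.star_def, Complex.conj_ofReal, ← Complex.ofReal_mul,
        ← Real.sqrt_inv, Real.mul_self_sqrt (by positivity), Complex.ofReal_inv,
        Complex.ofReal_natCast]
    calc ∑ x : Fin N × Fin N, (starRingEnd ℂ) (v₀ x) * v₀ x
        = ∑ x : Fin N × Fin N, (if x.1 = x.2 then (N : ℂ)⁻¹ else 0) := by
          refine Finset.sum_congr rfl fun x _ => ?_
          simp only [hv₀]
          split
          · exact hss
          · simp
      _ = ∑ i : Fin N, ∑ j : Fin N, (if i = j then (N : ℂ)⁻¹ else 0) := by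
          rw [← Finset.univ_product_univ, Finset.sum_product]
      _ = 1 := by simp [mul_inv_cancel₀ hNc, Finset.card_univ]
  -- orthonormal singleton family
  have horth : Orthonormal ℂ (({k0} : Set (Fin (N ^ 2))).restrict (fun _ => v₀)) := by
    constructor
    · rintro ⟨i, hi⟩
      have : ‖v₀‖ ^ 2 = 1 := by
        have := @inner_self_eq_norm_sq ℂ (EuclideanSpace ℂ (Fin N × Fin N)) _ _ _ v₀
        rw [← this]
        simpa using congrArg Complex.re hvv
      show ‖v₀‖ = 1
      nlinarith [norm_nonneg v₀]
    · rintro ⟨i, hi⟩ ⟨j, hj⟩ hij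
      exact absurd (Subtype.ext (show i = j from (Set.mem_singleton_iff.mp hi).trans (Set.mem_singleton_iff.mp hj).symm)) hij
  obtain ⟨b, hb⟩ := horth.exists_orthonormalBasis_extension_of_card_eq
    (by simp [finrank_euclideanSpace, sq])
  have hbk0 : b k0 = v₀ := hb k0 rfl
  refine ⟨fun k => Matrix.of fun i a => b k (i, a), ?_, ?_, ?_⟩
  · ext i a
    have : b k0 (i, a) = v₀ (i, a) := by rw [hbk0]
    simp only [Matrix.of_apply, Matrix.smul_apply, Matrix.one_apply, smul_eq_mul]
    rw [this]
    simp only [hv₀]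
    by_cases h : i = a <;> simp [h]
  · intro k l
    have h1 := (orthonormal_iff_ite.mp b.orthonormal) k l
    rw [PiLp.inner_apply] at h1
    rw [← h1, ← Finset.univ_product_univ, Finset.sum_product]
    rw [Matrix.trace]
    rw [Finset.sum_comm]
    refine Finset.sum_congr rfl fun i _ => ?_
    simp [Matrix.diag, Matrix.mul_apply, Matrix.conjTranspose_apply, mul_comm]
  · intro i a j b'
    have h2 := b.sum_inner_mul_inner (EuclideanSpace.single (i, a) (1 : ℂ))
      (EuclideanSpace.single (j, b') (1 : ℂ))
    simp only [EuclideanSpace.inner_single_left, EuclideanSpace.inner_single_right,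
      EuclideanSpace.single_apply, _root_.map_one, one_mul, mul_one] at h2
    calc ∑ k : Fin (N ^ 2), (fun k => of fun i a => b k (i, a)) k i a
          * star ((fun k => of fun i a => b k (i, a)) k j b')
        = ∑ x : Fin (N ^ 2), b x (i, a) * (starRingEnd ℂ) (b x (j, b')) := rfl
      _ = (starRingEnd ℂ) (if (j, b') = (i, a) then 1 else 0) := h2
      _ = if i = j ∧ a = b' then 1 else 0 := by
          by_cases h : i = j ∧ a = b'
      
          · simp [h.1, h.2, Prod.ext_iff]
          · rw [if_neg h, if_neg, map_zero]
            rw [Prod.mk.injEq]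
            tauto


/-- GKSL form: if `L` is linear with `L(A*) = L(A)*` and `tr(L(A)) = 0`,
then `L(A) = -i[H,A] + (1/2)∑_p λ_p([G_p, A G_p*] + [G_p A, G_p*])` with
`H` self-adjoint traceless and `(G_p)` traceless orthonormal. -/
theorem stmt8 (N : ℕ) (hN : 0 < N)
    (L : Matrix (Fin N) (Fin N) ℂ →ₗ[ℂ] Matrix (Fin N) (Fin N) ℂ)
    (hstar : ∀ A, L Aᴴ = (L A)ᴴ)
    (htr : ∀ A, (L A).trace = 0) :
    ∃ (H : Matrix (Fin N) (Fin N) ℂ)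
      (G : Fin (N ^ 2 - 1) → Matrix (Fin N) (Fin N) ℂ)
      (lam : Fin (N ^ 2 - 1) → ℝ),
      H.IsHermitian ∧ H.trace = 0 ∧
      (∀ p, (G p).trace = 0) ∧
      (∀ p q, ((G p)ᴴ * G q).trace = if p = q then 1 else 0) ∧
      (∀ A, L A = -Complex.I • (H * A - A * H) +
        (1 / 2 : ℂ) • ∑ p, (lam p : ℂ) •
          ((G p * (A * (G p)ᴴ) - A * (G p)ᴴ * G p) +
           (G p * A * (G p)ᴴ - (G p)ᴴ * (G p * A)))) := by
  have hn2 : 0 < N ^ 2 := by positivity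
  obtain ⟨F, hF0, horth, hcomp⟩ := gksl_exists_F N hN hn2
  exact gksl_main N hN hn2 L hstar htr F hF0 horth hcomp
end

section
/- Let Φ: M_n(ℂ) → M_n(ℂ) be a linear map such that b*Φ(a*a)b ≥ 0 whenever a,b ∈ M_n(ℂ) satisfy ab = 0, and suppose Φ(A*) = Φ(A)* for all A. Then for every real λ > ‖Φ‖ (operator norm), the map 1 − λ⁻¹Φ is invertible and its inverse is positivity-preserving: if (1 − λ⁻¹Φ)(a) is positive semidefinite, then a is positive semidefinite. -/
open Matrix BigOperators ComplexOrder

attribute [local instance] Matrix.linftyOpNormedAddCommGroup Matrix.linftyOpNormedRing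
  Matrix.linftyOpNormedAlgebra

private lemma unitEig {n : ℕ} {A : Matrix (Fin n) (Fin n) ℂ} (hA : A.IsHermitian) (i : Fin n) :
    star ⇑(hA.eigenvectorBasis i) ⬝ᵥ ⇑(hA.eigenvectorBasis i) = 1 := by
  have h := hA.eigenvectorBasis.orthonormal.1 i
  have h2 : (inner ℂ (hA.eigenvectorBasis i) (hA.eigenvectorBasis i) : ℂ) = 1 := by
    rw [inner_self_eq_norm_sq_to_K, h]; simp
  rwa [EuclideanSpace.inner_eq_star_dotProduct, dotProduct_comm] at h2

private lemma eigBound {n : ℕ} {A : Matrix (Fin n) (Fin n) ℂ} (hA : A.IsHermitian) (i : Fin n) :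
    |hA.eigenvalues i| ≤ ‖A‖ := by
  set w : Fin n → ℂ := ⇑(hA.eigenvectorBasis i) with hw
  have hw1 : star w ⬝ᵥ w = 1 := unitEig hA i
  have hw0 : w ≠ 0 := by
    intro h0
    rw [h0] at hw1; simp at hw1
  have h1 : ‖A *ᵥ w‖ ≤ ‖A‖ * ‖w‖ := Matrix.linfty_opNorm_mulVec _ _
  rw [hA.mulVec_eigenvectorBasis i, norm_smul] at h1
  have hwpos : 0 < ‖w‖ := norm_pos_iff.mpr hw0
  have := le_of_mul_le_mul_right h1 hwpos
  simpa [Real.norm_eq_abs] using this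

private lemma quadform_re_le {n : ℕ} {A : Matrix (Fin n) (Fin n) ℂ} (hA : A.IsHermitian)
    (v : Fin n → ℂ) (hv : star v ⬝ᵥ v = 1) :
    (star v ⬝ᵥ (A *ᵥ v)).re ≤ ‖A‖ := by
  set U : Matrix (Fin n) (Fin n) ℂ := (hA.eigenvectorUnitary : Matrix (Fin n) (Fin n) ℂ) with hU
  have hUU : U * star U = 1 := Matrix.mem_unitaryGroup_iff.mp hA.eigenvectorUnitary.2
  set d : Fin n → ℂ := RCLike.ofReal ∘ hA.eigenvalues with hd
  set w : Fin n → ℂ := star U *ᵥ v with hw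
  have hstarw : star w = star v ᵥ* U := by
    rw [hw, star_mulVec, star_eq_conjTranspose, conjTranspose_conjTranspose]
  have hww : star w ⬝ᵥ w = 1 := by
    rw [hw, hstarw, dotProduct_mulVec, vecMul_vecMul, hUU, vecMul_one, hv]
  have hkey : star v ⬝ᵥ (A *ᵥ v) = star w ⬝ᵥ (diagonal d *ᵥ w) := by
    conv_lhs => rw [hA.spectral_theorem, Unitary.conjStarAlgAut_apply]
    rw [← hU, ← hd, ← mulVec_mulVec, ← mulVec_mulVec, dotProduct_mulVec, ← hstarw, ← hw]
  have hdiag : star w ⬝ᵥ (diagonal d *ᵥ w) =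
      ∑ i, (hA.eigenvalues i : ℂ) * ↑(Complex.normSq (w i)) := by
    rw [dotProduct]
    refine Finset.sum_congr rfl fun i _ => ?_
    rw [mulVec_diagonal]
    simp only [Pi.star_apply, hd, Function.comp_apply, RCLike.ofReal_alg,
      Complex.real_smul, Complex.normSq_eq_conj_mul_self]
    rw [Complex.star_def]
    ring
  have hsum1 : ∑ i, Complex.normSq (w i) = 1 := by
    have : star w ⬝ᵥ w = ∑ i, (Complex.normSq (w i) : ℂ) := by
      rw [dotProduct]
      exact Finset.sum_congr rfl fun i _ => by
        simp [Complex.normSq_eq_conj_mul_self]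
    rw [this] at hww
    exact_mod_cast hww
  rw [hkey, hdiag]
  rw [Complex.re_sum]
  calc ∑ i, ((hA.eigenvalues i : ℂ) * ↑(Complex.normSq (w i))).re
      = ∑ i, hA.eigenvalues i * Complex.normSq (w i) := by
        refine Finset.sum_congr rfl fun i _ => ?_
        norm_cast
    _ ≤ ∑ i, ‖A‖ * Complex.normSq (w i) := by
        refine Finset.sum_le_sum fun i _ => ?_
        exact mul_le_mul_of_nonneg_right ((le_abs_self _).trans (eigBound hA i))
          (Complex.normSq_nonneg _)
    _ = ‖A‖ := by rw [← Finset.mul_sum, hsum1, mul_one]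

/-- If `Φ` is `*`-preserving and satisfies `b*Φ(a*a)b ≥ 0` whenever `ab = 0`,
then for `λ > ‖Φ‖` the map `1 − λ⁻¹Φ` is invertible with positivity-preserving
inverse. -/
theorem stmt14 (n : ℕ)
    (Φ : Matrix (Fin n) (Fin n) ℂ →L[ℂ] Matrix (Fin n) (Fin n) ℂ)
    (hstar : ∀ A, Φ Aᴴ = (Φ A)ᴴ)
    (hcond : ∀ a b : Matrix (Fin n) (Fin n) ℂ, a * b = 0 →
      (bᴴ * Φ (aᴴ * a) * b).PosSemidef) :
    ∀ lam : ℝ, @Norm.norm _ (@ContinuousLinearMap.hasOpNorm ℂ ℂ _ _ _ _ _ _ _ _ (RingHom.id ℂ)) Φ < lam →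
      (Function.Bijective fun a : Matrix (Fin n) (Fin n) ℂ => a - lam⁻¹ • Φ a) ∧
      (∀ a : Matrix (Fin n) (Fin n) ℂ,
        (a - lam⁻¹ • Φ a).PosSemidef → a.PosSemidef) := by
  intro lam hlam
  letI i2 : NormedRing (Matrix (Fin n) (Fin n) ℂ →L[ℂ] Matrix (Fin n) (Fin n) ℂ) :=
    ContinuousLinearMap.toNormedRing
  letI i3 : NormedSpace ℂ (Matrix (Fin n) (Fin n) ℂ →L[ℂ] Matrix (Fin n) (Fin n) ℂ) :=
    ContinuousLinearMap.toNormedSpace (σ₁₂ := RingHom.id ℂ) (𝕜' := ℂ)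
  haveI i4 : CompleteSpace (Matrix (Fin n) (Fin n) ℂ) := FiniteDimensional.complete ℂ _
  haveI i5 : CompleteSpace (Matrix (Fin n) (Fin n) ℂ →L[ℂ] Matrix (Fin n) (Fin n) ℂ) :=
    FiniteDimensional.complete ℂ _
  haveI i6 : HasSummableGeomSeries (Matrix (Fin n) (Fin n) ℂ →L[ℂ] Matrix (Fin n) (Fin n) ℂ) :=
    @instHasSummableGeomSeriesOfCompleteSpace _ i2 i5
  have h0 : (0:ℝ) < lam := lt_of_le_of_lt (norm_nonneg _) hlam
  have hsm : ∀ x : (Matrix (Fin n) (Fin n) ℂ), lam⁻¹ • x = (lam:ℂ)⁻¹ • x := by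
    intro x
    ext i j
    show lam⁻¹ • x i j = (lam:ℂ)⁻¹ * x i j
    rw [Complex.real_smul, Complex.ofReal_inv]
  have hns := norm_smul ((lam:ℂ)⁻¹) Φ
  have hnorm : ‖((lam:ℂ)⁻¹ • Φ : (Matrix (Fin n) (Fin n) ℂ) →L[ℂ] (Matrix (Fin n) (Fin n) ℂ))‖ < 1 := by
    rw [hns]
    simp only [norm_inv, Complex.norm_real, Real.norm_eq_abs, abs_of_pos h0]
    rw [inv_mul_lt_iff₀ h0, mul_one]
    exact hlam
  let u : ((Matrix (Fin n) (Fin n) ℂ) →L[ℂ] (Matrix (Fin n) (Fin n) ℂ))ˣ := Units.oneSub ((lam:ℂ)⁻¹ • Φ) hnorm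
  have hfun : (fun a : (Matrix (Fin n) (Fin n) ℂ) => a - lam⁻¹ • Φ a) = ⇑(u.val) := by
    funext a
    have h1 : u.val = (1 : (Matrix (Fin n) (Fin n) ℂ) →L[ℂ] (Matrix (Fin n) (Fin n) ℂ)) - (lam:ℂ)⁻¹ • Φ := rfl
    rw [h1, hsm]
    simp
  have hbij : Function.Bijective (fun a : (Matrix (Fin n) (Fin n) ℂ) => a - lam⁻¹ • Φ a) := by
    rw [hfun]
    constructor
    · intro x y hxy
      have hx := congrFun (congrArg (DFunLike.coe) u.inv_mul) x
      have hy := congrFun (congrArg (DFunLike.coe) u.inv_mul) y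
      simp only [ContinuousLinearMap.mul_apply, ContinuousLinearMap.one_apply] at hx hy
      rw [← hx, ← hy, hxy]
    · intro y
      refine ⟨(↑u⁻¹ : (Matrix (Fin n) (Fin n) ℂ) →L[ℂ] (Matrix (Fin n) (Fin n) ℂ)) y, ?_⟩
      have := congrFun (congrArg (DFunLike.coe) u.mul_inv) y
      simpa only [ContinuousLinearMap.mul_apply, ContinuousLinearMap.one_apply] using this
  refine ⟨hbij, ?_⟩
  intro a hp
  -- a is Hermitian
  have haH : a.IsHermitian := by
    have h1 : (fun a : (Matrix (Fin n) (Fin n) ℂ) => a - lam⁻¹ • Φ a) aᴴ = (fun a : (Matrix (Fin n) (Fin n) ℂ) => a - lam⁻¹ • Φ a) a := by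
      show aᴴ - lam⁻¹ • Φ aᴴ = a - lam⁻¹ • Φ a
      conv_rhs => rw [← hp.isHermitian]
      rw [hstar a, conjTranspose_sub, conjTranspose_smul, star_trivial]
    exact hbij.injective h1
  by_contra hnot
  have hex : ∃ i, haH.eigenvalues i < 0 := by
    by_contra hall
    push_neg at hall
    exact hnot (haH.posSemidef_iff_eigenvalues_nonneg.mpr hall)
  obtain ⟨i₁, hi₁⟩ := hex
  haveI : Nonempty (Fin n) := ⟨i₁⟩
  obtain ⟨i₀, -, hmin⟩ := Finset.exists_min_image Finset.univ haH.eigenvalues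
    ⟨i₁, Finset.mem_univ _⟩
  set μ := haH.eigenvalues i₀ with hμdef
  have hμ : μ < 0 := lt_of_le_of_lt (hmin i₁ (Finset.mem_univ _)) hi₁
  set v : Fin n → ℂ := ⇑(haH.eigenvectorBasis i₀) with hv
  have hvv : star v ⬝ᵥ v = 1 := unitEig haH i₀
  have hav : a *ᵥ v = (μ:ℂ) • v := by
    rw [haH.mulVec_eigenvectorBasis i₀]
    ext j
    simp only [Pi.smul_apply, smul_eq_mul, Complex.real_smul]
    rfl
  set m : (Matrix (Fin n) (Fin n) ℂ) := a - (μ:ℂ) • 1 with hm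
  -- m is PSD
  have hmpsd : m.PosSemidef := by
    set U : (Matrix (Fin n) (Fin n) ℂ) := (haH.eigenvectorUnitary : (Matrix (Fin n) (Fin n) ℂ)) with hU
    have hUU : U * star U = 1 := Matrix.mem_unitaryGroup_iff.mp haH.eigenvectorUnitary.2
    have heq : m = U * diagonal (fun i => ((haH.eigenvalues i - μ : ℝ) : ℂ)) * star U := by
      have hA := haH.spectral_theorem
      rw [hm]
      conv_lhs => rw [hA, Unitary.conjStarAlgAut_apply, ← hU]
      have h1 : ((μ:ℂ) • (1:(Matrix (Fin n) (Fin n) ℂ))) = U * ((μ:ℂ) • (1:(Matrix (Fin n) (Fin n) ℂ))) * star U := by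
        rw [mul_smul_comm, smul_mul_assoc, mul_one, hUU]
      rw [h1, ← sub_mul, ← mul_sub]
      congr 1
      congr 1
      ext i j
      by_cases h : i = j
      · subst h
        simp [diagonal_apply_eq, Matrix.smul_apply, Matrix.one_apply_eq, Function.comp,
          Complex.ofReal_sub]
      · simp [diagonal_apply_ne _ h, Matrix.smul_apply, Matrix.one_apply_ne h]
    rw [heq]
    have hdpsd : (diagonal (fun i => ((haH.eigenvalues i - μ : ℝ) : ℂ))).PosSemidef := by
      refine posSemidef_diagonal_iff.mpr fun i => ?_
      rw [Complex.zero_le_real]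
      exact sub_nonneg.mpr (hmin i (Finset.mem_univ _))
    rw [star_eq_conjTranspose]
    exact hdpsd.mul_mul_conjTranspose_same U
  have hmv : m *ᵥ v = 0 := by
    rw [hm, sub_mulVec, smul_mulVec, one_mulVec, hav, sub_self]
  -- c = sqrt of m
  obtain ⟨c, hcH, hcc⟩ : ∃ c : (Matrix (Fin n) (Fin n) ℂ), cᴴ = c ∧ c * c = m := by
    set U : (Matrix (Fin n) (Fin n) ℂ) := (haH.eigenvectorUnitary : (Matrix (Fin n) (Fin n) ℂ)) with hU
    have hUU : U * star U = 1 := Matrix.mem_unitaryGroup_iff.mp haH.eigenvectorUnitary.2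
    have hUU' : star U * U = 1 := Matrix.mem_unitaryGroup_iff'.mp haH.eigenvectorUnitary.2
    have heq : m = U * diagonal (fun i => ((haH.eigenvalues i - μ : ℝ) : ℂ)) * star U := by
      have hA := haH.spectral_theorem
      rw [hm]
      conv_lhs => rw [hA, Unitary.conjStarAlgAut_apply, ← hU]
      have h1 : ((μ:ℂ) • (1:(Matrix (Fin n) (Fin n) ℂ))) = U * ((μ:ℂ) • (1:(Matrix (Fin n) (Fin n) ℂ))) * star U := by
        rw [mul_smul_comm, smul_mul_assoc, mul_one, hUU]
      rw [h1, ← sub_mul, ← mul_sub]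
      congr 1
      congr 1
      ext i j
      by_cases h : i = j
      · subst h
        simp [diagonal_apply_eq, Matrix.smul_apply, Matrix.one_apply_eq, Function.comp,
          Complex.ofReal_sub]
      · simp [diagonal_apply_ne _ h, Matrix.smul_apply, Matrix.one_apply_ne h]
    refine ⟨U * diagonal (fun i => ((Real.sqrt (haH.eigenvalues i - μ) : ℝ) : ℂ)) * star U, ?_, ?_⟩
    · rw [conjTranspose_mul, conjTranspose_mul, diagonal_conjTranspose, star_eq_conjTranspose,
        conjTranspose_conjTranspose, ← mul_assoc]
      congr 3
      funext i
      simp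
    · rw [heq]
      simp only [Matrix.mul_assoc]
      rw [← Matrix.mul_assoc (star U) U, hUU', Matrix.one_mul, ← Matrix.mul_assoc (diagonal _),
        diagonal_mul_diagonal]
      congr 3
      funext i
      rw [← Complex.ofReal_mul, Real.mul_self_sqrt (sub_nonneg.mpr (hmin i (Finset.mem_univ _)))]
  have hcv : c *ᵥ v = 0 := by
    have h2 : star (c *ᵥ v) ⬝ᵥ (c *ᵥ v) = 0 := by
      rw [star_mulVec, dotProduct_mulVec, vecMul_vecMul, hcH, hcc, ← dotProduct_mulVec,
        hmv, dotProduct_zero]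
    exact dotProduct_star_self_eq_zero.mp h2
  -- b = outer product v (star v)
  set b : (Matrix (Fin n) (Fin n) ℂ) := vecMulVec v (star v) with hb
  have hcb : c * b = 0 := by
    ext i j
    rw [Matrix.mul_apply]
    simp only [hb, vecMulVec_apply, Matrix.zero_apply]
    have hcv' : ∑ k, c i k * v k = 0 := by
      have := congrFun hcv i
      simpa [Matrix.mulVec, dotProduct] using this
    calc ∑ k, c i k * (v k * star v j) = (∑ k, c i k * v k) * star v j := by
          rw [Finset.sum_mul]
          exact Finset.sum_congr rfl fun k _ => by ring
      _ = 0 := by rw [hcv', zero_mul]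
  have happ := hcond c b hcb
  rw [hcH, hcc] at happ
  have hbH : bᴴ = b := by
    ext i j
    simp [hb, conjTranspose_apply, vecMulVec_apply, mul_comm]
  have hbw : ∀ w : Fin n → ℂ, b *ᵥ w = (star v ⬝ᵥ w) • v := by
    intro w
    ext i
    simp only [hb, Matrix.mulVec, dotProduct, vecMulVec_apply, Pi.smul_apply,
      smul_eq_mul]
    rw [Finset.sum_mul]
    exact Finset.sum_congr rfl fun k _ => by ring
  have key1 : 0 ≤ star v ⬝ᵥ (Φ m *ᵥ v) := by
    have h3 := happ.dotProduct_mulVec_nonneg v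
    have h4 : (bᴴ * Φ m * b) *ᵥ v = (star v ⬝ᵥ (Φ m *ᵥ v)) • v := by
      rw [← mulVec_mulVec, ← mulVec_mulVec, hbw v, hvv, one_smul, hbH, hbw]
    rw [h4] at h3
    rwa [dotProduct_smul, hvv, smul_eq_mul, mul_one] at h3
  have key2 : 0 ≤ star v ⬝ᵥ ((a - lam⁻¹ • Φ a) *ᵥ v) := hp.dotProduct_mulVec_nonneg v
  -- expand
  set qa : ℂ := star v ⬝ᵥ (Φ a *ᵥ v) with hqa
  set q1 : ℂ := star v ⬝ᵥ (Φ 1 *ᵥ v) with hq1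
  have key1' : 0 ≤ qa - (μ:ℂ) * q1 := by
    have hΦm : Φ m = Φ a - (μ:ℂ) • Φ 1 := by
      rw [hm, map_sub, _root_.map_smul]
    rw [hΦm, sub_mulVec, smul_mulVec, dotProduct_sub, dotProduct_smul,
      smul_eq_mul] at key1
    exact key1
  have key2' : 0 ≤ (μ:ℂ) - (lam:ℂ)⁻¹ * qa := by
    rw [hsm, sub_mulVec, smul_mulVec, dotProduct_sub, dotProduct_smul, smul_eq_mul,
      hav, dotProduct_smul, hvv, smul_eq_mul, mul_one] at key2
    exact key2
  -- pass to real parts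
  have key1re : 0 ≤ qa.re - μ * q1.re := by
    have := (Complex.le_def.mp key1').1
    simpa [Complex.re_ofReal_mul] using this
  have key2re : 0 ≤ μ - lam⁻¹ * qa.re := by
    have := (Complex.le_def.mp key2').1
    have h5 : ((lam:ℂ)⁻¹ * qa).re = lam⁻¹ * qa.re := by
      rw [← Complex.ofReal_inv, Complex.re_ofReal_mul]
    simpa [h5] using this
  have hqa_le : qa.re ≤ lam * μ := by
    have h6 : lam⁻¹ * qa.re ≤ μ := by linarith
    have h7 := mul_le_mul_of_nonneg_left h6 h0.le
    rwa [← mul_assoc, mul_inv_cancel₀ (ne_of_gt h0), one_mul] at h7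
  -- q1.re ≤ ‖Φ‖
  have hΦ1H : (Φ (1:(Matrix (Fin n) (Fin n) ℂ))).IsHermitian := by
    have := hstar (1:(Matrix (Fin n) (Fin n) ℂ))
    rw [conjTranspose_one] at this
    exact this.symm
  have hq1le : q1.re ≤ ‖Φ (1:(Matrix (Fin n) (Fin n) ℂ))‖ := quadform_re_le hΦ1H v hvv
  have hnorm1 : ‖(1:(Matrix (Fin n) (Fin n) ℂ))‖ = 1 := norm_one
  have hΦ1 : ‖Φ (1:(Matrix (Fin n) (Fin n) ℂ))‖ ≤ ‖Φ‖ := by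
    have := Φ.le_opNorm (1:(Matrix (Fin n) (Fin n) ℂ))
    rwa [hnorm1, mul_one] at this
  have hq1lam : q1.re < lam := lt_of_le_of_lt (hq1le.trans hΦ1) hlam
  nlinarith [mul_pos (sub_pos.mpr hq1lam) (neg_pos.mpr hμ)]
end

section
/- Let L(A) = −i[H,A] + (1/2)∑_{p=1}^{m} λ_p([G_p, A G_p*] + [G_p A, G_p*]) with H ∈ M_N(ℂ) self-adjoint, G_p ∈ M_N(ℂ), and λ_p ≥ 0 for all p. Then for every t ≥ 0 the map T_t = e^{tL} on M_N(ℂ) is positive, i.e., maps positive semidefinite matrices to positive semidefinite matrices. -/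
open Matrix BigOperators ComplexOrder

attribute [local instance] Matrix.linftyOpNormedAddCommGroup Matrix.linftyOpNormedRing
  Matrix.linftyOpNormedAlgebra

open NormedSpace Nat Filter Topology

set_option linter.unusedSectionVars false
set_option maxHeartbeats 1000000

section Banach

variable {𝔸 : Type*} [NormedRing 𝔸] [NormedAlgebra ℂ 𝔸] [CompleteSpace 𝔸]

lemma aux_term_norm_le [NormOneClass 𝔸] (x : 𝔸) (n : ℕ) :
    ‖((n ! : ℂ))⁻¹ • x ^ n‖ ≤ ‖x‖ ^ n / (n ! : ℝ) := by
  rw [norm_smul, norm_inv, Complex.norm_natCast, div_eq_inv_mul]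
  have h1 : (0:ℝ) ≤ ((n ! : ℝ))⁻¹ := by positivity
  exact mul_le_mul_of_nonneg_left (norm_pow_le x n) h1

lemma aux_real_exp_tsum (r : ℝ) : Real.exp r = ∑' n : ℕ, r ^ n / (n ! : ℝ) := by
  rw [Real.exp_eq_exp_ℝ, exp_eq_tsum_div]

lemma aux_exp_eq (x : 𝔸) : exp x = ∑' n : ℕ, ((n ! : ℂ))⁻¹ • x ^ n := by
  rw [exp_eq_tsum ℂ]

lemma aux_exp_div_summable (x : 𝔸) : Summable (fun n : ℕ => ‖x‖ ^ n / (n ! : ℝ)) := by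
  have := NormedSpace.expSeries_div_summable (‖x‖)
  simpa using this

lemma aux_norm_exp_le [NormOneClass 𝔸] (x : 𝔸) : ‖exp x‖ ≤ Real.exp ‖x‖ := by
  rw [aux_exp_eq, aux_real_exp_tsum]
  refine (norm_tsum_le_tsum_norm (norm_expSeries_summable' x)).trans ?_
  exact Summable.tsum_le_tsum (fun n => aux_term_norm_le x n) (norm_expSeries_summable' x)
    (aux_exp_div_summable x)

lemma aux_exp_sub_head (x : 𝔸) :
    exp x = 1 + x + ∑' n : ℕ, ((((n+2) : ℕ) ! : ℂ))⁻¹ • x ^ (n+2) := by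
  have hs : Summable (fun n : ℕ => ((n ! : ℂ))⁻¹ • x ^ n) := expSeries_summable' x
  have h1 : Summable (fun n : ℕ => ((((n+1) : ℕ) ! : ℂ))⁻¹ • x ^ (n+1)) :=
    ((summable_nat_add_iff 1).mpr hs)
  rw [aux_exp_eq, Summable.tsum_eq_zero_add hs, Summable.tsum_eq_zero_add h1]
  simp [add_assoc]

lemma aux_norm_exp_sub_one_le [NormOneClass 𝔸] (x : 𝔸) :
    ‖exp x - 1‖ ≤ ‖x‖ * Real.exp ‖x‖ := by
  have hs : Summable (fun n : ℕ => ((n ! : ℂ))⁻¹ • x ^ n) := expSeries_summable' x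
  have h1 : Summable (fun n : ℕ => ((((n+1) : ℕ) ! : ℂ))⁻¹ • x ^ (n+1)) :=
    ((summable_nat_add_iff 1).mpr hs)
  have : exp x - 1 = ∑' n : ℕ, ((((n+1) : ℕ) ! : ℂ))⁻¹ • x ^ (n+1) := by
    rw [aux_exp_eq, Summable.tsum_eq_zero_add hs]; simp
  rw [this]
  have hnorm := norm_tsum_le_tsum_norm (f := fun n : ℕ => ((((n+1) : ℕ) ! : ℂ))⁻¹ • x ^ (n+1))
    ((summable_nat_add_iff 1).mpr (norm_expSeries_summable' x))
  refine hnorm.trans ?_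
  have hb : ∀ n : ℕ, ‖((((n+1) : ℕ) ! : ℂ))⁻¹ • x ^ (n+1)‖ ≤ ‖x‖ * (‖x‖ ^ n / (n ! : ℝ)) := by
    intro n
    refine (aux_term_norm_le x (n+1)).trans ?_
    have h3 : ((n ! : ℝ)) ≤ (((n+1) : ℕ) ! : ℝ) := by
      exact_mod_cast Nat.factorial_le (Nat.le_succ n)
    calc ‖x‖ ^ (n+1) / (((n+1) : ℕ) ! : ℝ) ≤ ‖x‖ ^ (n+1) / (n ! : ℝ) := by
          gcongr
      _ = ‖x‖ * (‖x‖ ^ n / (n ! : ℝ)) := by rw [pow_succ]; ring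
  have hts := Summable.tsum_le_tsum hb ((summable_nat_add_iff 1).mpr (norm_expSeries_summable' x))
    ((aux_exp_div_summable x).mul_left ‖x‖)
  refine hts.trans ?_
  rw [tsum_mul_left, aux_real_exp_tsum]

lemma aux_norm_exp_sub_one_sub_le' [NormOneClass 𝔸] (x : 𝔸) :
    ‖exp x - 1 - x‖ ≤ ‖x‖ ^ 2 * Real.exp ‖x‖ := by
  have : exp x - 1 - x = ∑' n : ℕ, ((((n+2) : ℕ) ! : ℂ))⁻¹ • x ^ (n+2) := by
    rw [aux_exp_sub_head x]; abel
  rw [this]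
  have hnorm := norm_tsum_le_tsum_norm (f := fun n : ℕ => ((((n+2) : ℕ) ! : ℂ))⁻¹ • x ^ (n+2))
    ((summable_nat_add_iff 2).mpr (norm_expSeries_summable' x))
  refine hnorm.trans ?_
  have hb : ∀ n : ℕ, ‖((((n+2) : ℕ) ! : ℂ))⁻¹ • x ^ (n+2)‖ ≤ ‖x‖ ^ 2 * (‖x‖ ^ n / (n ! : ℝ)) := by
    intro n
    refine (aux_term_norm_le x (n+2)).trans ?_
    have h3 : ((n ! : ℝ)) ≤ (((n+2) : ℕ) ! : ℝ) := by
      exact_mod_cast Nat.factorial_le (by omega)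
    calc ‖x‖ ^ (n+2) / (((n+2) : ℕ) ! : ℝ) ≤ ‖x‖ ^ (n+2) / (n ! : ℝ) := by
          gcongr
      _ = ‖x‖ ^ 2 * (‖x‖ ^ n / (n ! : ℝ)) := by rw [pow_add]; ring
  have hts := Summable.tsum_le_tsum hb ((summable_nat_add_iff 2).mpr (norm_expSeries_summable' x))
    ((aux_exp_div_summable x).mul_left (‖x‖ ^ 2))
  refine hts.trans ?_
  rw [tsum_mul_left, aux_real_exp_tsum]

lemma aux_norm_pow_sub_pow [NormOneClass 𝔸] (u v : 𝔸) (M : ℝ) (hM : 1 ≤ M)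
    (hu : ‖u‖ ≤ M) (hv : ‖v‖ ≤ M) (n : ℕ) :
    ‖u ^ n - v ^ n‖ ≤ n * M ^ n * ‖u - v‖ := by
  have hM0 : (0:ℝ) ≤ M := le_trans zero_le_one hM
  induction n with
  | zero => simp
  | succ n ih =>
    have hid : u ^ (n+1) - v ^ (n+1) = (u ^ n - v ^ n) * v + u ^ n * (u - v) := by
      rw [pow_succ, pow_succ, sub_mul, mul_sub]
      abel
    rw [hid]
    have h1 : ‖(u ^ n - v ^ n) * v‖ ≤ (n * M ^ n * ‖u - v‖) * M := by
      refine (norm_mul_le _ _).trans ?_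
      refine mul_le_mul ih hv (norm_nonneg _) ?_
      positivity
    have h2 : ‖u ^ n * (u - v)‖ ≤ M ^ n * ‖u - v‖ := by
      refine (norm_mul_le _ _).trans ?_
      exact mul_le_mul_of_nonneg_right ((norm_pow_le u n).trans
        (pow_le_pow_left₀ (norm_nonneg u) hu n)) (norm_nonneg _)
    refine (norm_add_le _ _).trans ((add_le_add h1 h2).trans ?_)
    have hn0 : (0:ℝ) ≤ ‖u - v‖ := norm_nonneg _
    rw [pow_succ]
    push_cast
    nlinarith [pow_nonneg hM0 n, mul_nonneg (pow_nonneg hM0 n) hn0,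
      sub_nonneg.mpr hM, mul_nonneg (mul_nonneg (pow_nonneg hM0 n) hn0) (sub_nonneg.mpr hM),
      mul_nonneg (mul_nonneg (mul_nonneg (Nat.cast_nonneg n) (pow_nonneg hM0 n)) hn0)
        (sub_nonneg.mpr hM)]

lemma aux_arith (n c e1 e2 : ℝ) (hn : n ≠ 0) :
    n * e1 * (4 * ((c / n) ^ 2 * e2)) = 4 * c ^ 2 * (e1 * e2) / n := by
  field_simp

/-- Lie–Trotter product formula in a Banach algebra. -/
lemma aux_trotter [NormOneClass 𝔸] (x y : 𝔸) :
    Tendsto (fun n : ℕ => (exp ((n : ℂ)⁻¹ • x) * exp ((n : ℂ)⁻¹ • y)) ^ n)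
      atTop (𝓝 (exp (x + y))) := by
  set c : ℝ := ‖x‖ + ‖y‖ with hc
  have hc0 : 0 ≤ c := by positivity
  rw [tendsto_iff_norm_sub_tendsto_zero]
  have hbound : ∀ n : ℕ, 1 ≤ n →
      ‖(exp ((n : ℂ)⁻¹ • x) * exp ((n : ℂ)⁻¹ • y)) ^ n - exp (x + y)‖
        ≤ 4 * c ^ 2 * Real.exp (3 * c) / n := by
    intro n hn
    have hn0 : (n:ℝ) ≠ 0 := by positivity
    have hn0' : (n:ℂ) ≠ 0 := Nat.cast_ne_zero.mpr (by omega)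
    have hn1 : (1:ℝ) ≤ (n:ℝ) := by exact_mod_cast hn
    set a : 𝔸 := (n : ℂ)⁻¹ • x with ha
    set b : 𝔸 := (n : ℂ)⁻¹ • y with hb
    set d : ℝ := c / n with hd
    have hd0 : 0 ≤ d := by positivity
    have hdc : d ≤ c := by
      rw [hd, div_le_iff₀ (by positivity)]
      nlinarith
    have hna : ‖a‖ ≤ d := by
      rw [ha, norm_smul, norm_inv, Complex.norm_natCast, hd, inv_mul_eq_div, hc]
      gcongr
      · linarith [norm_nonneg y]
    have hnb : ‖b‖ ≤ d := by
      rw [hb, norm_smul, norm_inv, Complex.norm_natCast, hd, inv_mul_eq_div, hc]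
      gcongr
      · linarith [norm_nonneg x]
    have hab : a + b = (n : ℂ)⁻¹ • (x + y) := by rw [ha, hb, smul_add]
    have hnab : ‖a + b‖ ≤ d := by
      rw [hab, norm_smul, norm_inv, Complex.norm_natCast, hd, inv_mul_eq_div, hc]
      gcongr
      exact norm_add_le x y
    set u : 𝔸 := exp (a + b) with hu
    set v : 𝔸 := exp a * exp b with hv
    have hxy : exp (x + y) = u ^ n := by
      letI : NormedAlgebra ℚ 𝔸 := NormedAlgebra.restrictScalars ℚ ℂ 𝔸
      rw [hu, hab, ← NormedSpace.exp_nsmul n ((n : ℂ)⁻¹ • (x + y))]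
      congr 1
      rw [← Nat.cast_smul_eq_nsmul ℂ, smul_smul, mul_inv_cancel₀ hn0', one_smul]
    -- bound on ‖u - v‖
    have hA5 : ‖u - 1 - (a + b)‖ ≤ d ^ 2 * Real.exp (2 * c) := by
      refine (aux_norm_exp_sub_one_sub_le' (a + b)).trans ?_
      gcongr
      linarith
    have hA1 : ‖exp a - 1 - a‖ ≤ d ^ 2 * Real.exp c := by
      refine (aux_norm_exp_sub_one_sub_le' a).trans ?_
      gcongr
      linarith
    have hA2 : ‖exp b - 1 - b‖ ≤ d ^ 2 * Real.exp c := by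
      refine (aux_norm_exp_sub_one_sub_le' b).trans ?_
      gcongr
      linarith
    have hA3 : ‖exp b - 1‖ ≤ d * Real.exp c := by
      refine (aux_norm_exp_sub_one_le b).trans ?_
      gcongr
      linarith
    have hA4 : ‖exp b‖ ≤ Real.exp c := by
      refine (aux_norm_exp_le b).trans ?_
      exact Real.exp_le_exp.mpr (le_trans hnb hdc)
    have hdecomp : v - 1 - (a + b) =
        (exp a - 1 - a) * exp b + a * (exp b - 1) + (exp b - 1 - b) := by
      rw [hv]
      noncomm_ring
    have hvb : ‖v - 1 - (a + b)‖ ≤ 3 * (d ^ 2 * Real.exp (2 * c)) := by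
      rw [hdecomp]
      have t1 : ‖(exp a - 1 - a) * exp b‖ ≤ (d ^ 2 * Real.exp c) * Real.exp c :=
        (norm_mul_le _ _).trans (mul_le_mul hA1 hA4 (norm_nonneg _) (by positivity))
      have t2 : ‖a * (exp b - 1)‖ ≤ d * (d * Real.exp c) :=
        (norm_mul_le _ _).trans (mul_le_mul hna hA3 (norm_nonneg _) hd0)
      have hec : (1:ℝ) ≤ Real.exp c := Real.one_le_exp hc0
      have hee : Real.exp c * Real.exp c = Real.exp (2 * c) := by
        rw [← Real.exp_add]; ring_nf
      have h2c : Real.exp c ≤ Real.exp (2 * c) := by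
        rw [← hee]; nlinarith [Real.exp_pos c]
      refine (norm_add_le _ _).trans ?_
      refine (add_le_add ((norm_add_le _ _).trans (add_le_add t1 t2)) hA2).trans ?_
      have e1 : (d ^ 2 * Real.exp c) * Real.exp c = d ^ 2 * Real.exp (2 * c) := by
        rw [mul_assoc, hee]
      have e2 : d * (d * Real.exp c) ≤ d ^ 2 * Real.exp (2 * c) := by
        rw [show d * (d * Real.exp c) = d ^ 2 * Real.exp c by ring]
        exact mul_le_mul_of_nonneg_left h2c (by positivity)
      have e3 : d ^ 2 * Real.exp c ≤ d ^ 2 * Real.exp (2 * c) :=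
        mul_le_mul_of_nonneg_left h2c (by positivity)
      linarith
    have huv : ‖u - v‖ ≤ 4 * (d ^ 2 * Real.exp (2 * c)) := by
      have : u - v = (u - 1 - (a + b)) - (v - 1 - (a + b)) := by abel
      rw [this]
      refine (norm_sub_le _ _).trans ?_
      linarith
    -- bound on norms of u and v
    set M : ℝ := Real.exp d with hM
    have hM1 : (1:ℝ) ≤ M := Real.one_le_exp hd0
    have hMu : ‖u‖ ≤ M := by
      refine (aux_norm_exp_le (a+b)).trans ?_
      rw [hM]; gcongr
    have hna' : ‖a‖ ≤ ‖x‖ / n := by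
      rw [ha, norm_smul, norm_inv, Complex.norm_natCast, inv_mul_eq_div]
    have hnb' : ‖b‖ ≤ ‖y‖ / n := by
      rw [hb, norm_smul, norm_inv, Complex.norm_natCast, inv_mul_eq_div]
    have hMv : ‖v‖ ≤ M := by
      rw [hv]
      refine (norm_mul_le _ _).trans ?_
      refine (mul_le_mul (aux_norm_exp_le a) (aux_norm_exp_le b)
        (norm_nonneg _) (Real.exp_pos _).le).trans ?_
      rw [← Real.exp_add, hM]
      refine Real.exp_le_exp.mpr ?_
      refine le_trans (add_le_add hna' hnb') (le_of_eq ?_)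
      rw [hd, hc, ← add_div]
    have hMn : M ^ n = Real.exp c := by
      rw [hM, hd, ← Real.exp_nat_mul, mul_div_cancel₀ c hn0]
    rw [hxy, norm_sub_rev]
    refine (aux_norm_pow_sub_pow u v M hM1 hMu hMv n).trans ?_
    have step : (n:ℝ) * M ^ n * ‖u - v‖ ≤ n * Real.exp c * (4 * (d ^ 2 * Real.exp (2 * c))) := by
      rw [hMn]
      gcongr
    refine step.trans (le_of_eq ?_)
    rw [hd, aux_arith n c (Real.exp c) (Real.exp (2 * c)) hn0, ← Real.exp_add]
    ring_nf
  have h0 : Tendsto (fun n : ℕ => 4 * c ^ 2 * Real.exp (3 * c) / n) atTop (𝓝 0) :=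
    tendsto_const_div_atTop_nhds_zero_nat _
  refine squeeze_zero_norm' ?_ h0
  filter_upwards [eventually_ge_atTop 1] with n hn
  exact (Real.norm_of_nonneg (norm_nonneg _)).le.trans (hbound n hn)

/-- Left multiplication as an algebra homomorphism into continuous linear maps. -/
noncomputable def lmulAlgHom (𝔸 : Type*) [NormedRing 𝔸] [NormedAlgebra ℂ 𝔸] : 𝔸 →ₐ[ℂ] (𝔸 →L[ℂ] 𝔸) where
  toFun a := ContinuousLinearMap.mul ℂ 𝔸 a
  map_one' := by ext A; simp
  map_mul' a b := by ext A; simp [mul_assoc]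
  map_zero' := by ext A; simp
  map_add' a b := by ext A; simp [add_mul]
  commutes' c := by
    ext A
    simp [Algebra.algebraMap_eq_smul_one, smul_mul_assoc]

/-- Right multiplication as an algebra homomorphism from the opposite algebra. -/
noncomputable def rmulAlgHom (𝔸 : Type*) [NormedRing 𝔸] [NormedAlgebra ℂ 𝔸] : 𝔸ᵐᵒᵖ →ₐ[ℂ] (𝔸 →L[ℂ] 𝔸) where
  toFun a := (ContinuousLinearMap.mul ℂ 𝔸).flip a.unop
  map_one' := by ext A; simp
  map_mul' a b := by ext A; simp [mul_assoc]
  map_zero' := by ext A; simp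
  map_add' a b := by ext A; simp [mul_add]
  commutes' c := by
    ext A
    simp [Algebra.algebraMap_eq_smul_one, mul_smul_comm]

/-- exp of the left multiplication operator. -/
lemma aux_exp_lmul (a : 𝔸) :
    exp (ContinuousLinearMap.mul ℂ 𝔸 a) = ContinuousLinearMap.mul ℂ 𝔸 (exp a) := by
  have hcont : Continuous (lmulAlgHom 𝔸) := (ContinuousLinearMap.mul ℂ 𝔸).continuous
  letI : NormedAlgebra ℚ 𝔸 := NormedAlgebra.restrictScalars ℚ ℂ 𝔸
  letI : Algebra ℚ (𝔸 →L[ℂ] 𝔸) := Algebra.compHom _ (algebraMap ℚ ℂ)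
  have := map_exp (lmulAlgHom 𝔸) hcont a
  simpa [lmulAlgHom] using this.symm

/-- exp of the right multiplication operator. -/
lemma aux_exp_rmul (b : 𝔸) :
    exp ((ContinuousLinearMap.mul ℂ 𝔸).flip b) = (ContinuousLinearMap.mul ℂ 𝔸).flip (exp b) := by
  have hcont : Continuous (rmulAlgHom 𝔸) := by
    have : Continuous fun x : 𝔸ᵐᵒᵖ => (ContinuousLinearMap.mul ℂ 𝔸).flip x.unop :=
      (ContinuousLinearMap.mul ℂ 𝔸).flip.continuous.comp MulOpposite.continuous_unop
    exact this
  letI : NormedAlgebra ℚ 𝔸 := NormedAlgebra.restrictScalars ℚ ℂ 𝔸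
  letI : Algebra ℚ (𝔸 →L[ℂ] 𝔸) := Algebra.compHom _ (algebraMap ℚ ℂ)
  have h1 := map_exp (rmulAlgHom 𝔸) hcont (MulOpposite.op b)
  have h2 : exp (MulOpposite.op b) = MulOpposite.op (exp b) := exp_op b
  rw [h2] at h1
  simpa [rmulAlgHom] using h1.symm

lemma aux_exp_lmul_add_rmul (a b : 𝔸) (A : 𝔸) :
    exp (ContinuousLinearMap.mul ℂ 𝔸 a + (ContinuousLinearMap.mul ℂ 𝔸).flip b) A
      = exp a * A * exp b := by
  have hcomm : Commute (ContinuousLinearMap.mul ℂ 𝔸 a) ((ContinuousLinearMap.mul ℂ 𝔸).flip b) := by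
    apply ContinuousLinearMap.ext
    intro A
    simp [ContinuousLinearMap.mul_apply, mul_assoc]
  letI : NormedAlgebra ℚ (𝔸 →L[ℂ] 𝔸) := NormedAlgebra.restrictScalars ℚ ℂ _
  rw [NormedSpace.exp_add_of_commute hcomm, aux_exp_lmul, aux_exp_rmul]
  simp [ContinuousLinearMap.mul_apply, mul_assoc]

end Banach

section MatrixLemmas

variable {N : ℕ}

local notation "𝕄" => Matrix (Fin N) (Fin N) ℂ

lemma aux_psd_smul {A : 𝕄} (hA : A.PosSemidef) {c : ℝ} (hc : 0 ≤ c) :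
    ((c : ℂ) • A).PosSemidef := by
  rw [posSemidef_iff_dotProduct_mulVec]
  constructor
  · unfold Matrix.IsHermitian
    rw [conjTranspose_smul, hA.1.eq, Complex.star_def, Complex.conj_ofReal]
  · intro x
    rw [smul_mulVec, dotProduct_smul, smul_eq_mul]
    exact mul_nonneg (by exact_mod_cast hc) (hA.dotProduct_mulVec_nonneg x)

lemma aux_psd_limit (f : ℕ → 𝕄) (A : 𝕄) (hf : ∀ n, (f n).PosSemidef)
    (h : Tendsto f atTop (𝓝 A)) : A.PosSemidef := by
  rw [posSemidef_iff_dotProduct_mulVec]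
  constructor
  · -- Hermitian
    have hct : Continuous fun M : 𝕄 => Mᴴ := continuous_id.matrix_conjTranspose
    have h2 : Tendsto (fun n => (f n)ᴴ) atTop (𝓝 Aᴴ) := (hct.tendsto A).comp h
    have h3 : (fun n => (f n)ᴴ) = f := funext fun n => (hf n).1
    rw [h3] at h2
    exact tendsto_nhds_unique h2 h
  · intro x
    have hct : Continuous fun M : 𝕄 => dotProduct (star x) (M.mulVec x) :=
      continuous_const.dotProduct (continuous_id.matrix_mulVec continuous_const)
    have h2 : Tendsto (fun n => dotProduct (star x) ((f n).mulVec x)) atTop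
        (𝓝 (dotProduct (star x) (A.mulVec x))) := (hct.tendsto A).comp h
    rw [Complex.le_def]
    constructor
    · have hre : Tendsto (fun n => (dotProduct (star x) ((f n).mulVec x)).re) atTop
          (𝓝 ((dotProduct (star x) (A.mulVec x)).re)) :=
        (Complex.continuous_re.tendsto _).comp h2
      have : ∀ n, (0:ℝ) ≤ (dotProduct (star x) ((f n).mulVec x)).re := by
        intro n
        exact (Complex.le_def.mp ((hf n).dotProduct_mulVec_nonneg x)).1
      simpa using ge_of_tendsto' hre this
    · have him : Tendsto (fun n => (dotProduct (star x) ((f n).mulVec x)).im) atTop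
          (𝓝 ((dotProduct (star x) (A.mulVec x)).im)) :=
        (Complex.continuous_im.tendsto _).comp h2
      have heq : (fun n => (dotProduct (star x) ((f n).mulVec x)).im) = fun _ => (0:ℝ) := by
        funext n
        exact ((Complex.le_def.mp ((hf n).dotProduct_mulVec_nonneg x)).2).symm
      rw [heq] at him
      simpa using (tendsto_nhds_unique tendsto_const_nhds him)

end MatrixLemmas

/-- If `L` has Lindblad form with `H` self-adjoint and `λ_p ≥ 0`, then each
`T_t = e^{tL}` is a positive map. -/
theorem stmt15 (N m : ℕ) (hN : 0 < N)
    (L : Matrix (Fin N) (Fin N) ℂ →L[ℂ] Matrix (Fin N) (Fin N) ℂ)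
    (H : Matrix (Fin N) (Fin N) ℂ) (hH : H.IsHermitian)
    (G : Fin m → Matrix (Fin N) (Fin N) ℂ)
    (lam : Fin m → ℝ) (hlam : ∀ p, 0 ≤ lam p)
    (hL : ∀ A, L A = -Complex.I • (H * A - A * H) +
      (1 / 2 : ℂ) • ∑ p, (lam p : ℂ) •
        ((G p * (A * (G p)ᴴ) - A * (G p)ᴴ * G p) +
         (G p * A * (G p)ᴴ - (G p)ᴴ * (G p * A)))) :
    ∀ t : ℝ, 0 ≤ t → ∀ A : Matrix (Fin N) (Fin N) ℂ,
      A.PosSemidef → (@NormedSpace.exp _ _ _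
        (@NonUnitalSeminormedRing.toIsTopologicalRing _
          (ContinuousLinearMap.toNormedRing (𝕜 := ℂ)
            (E := Matrix (Fin N) (Fin N) ℂ)).toNonUnitalNormedRing.toNonUnitalSeminormedRing) (t • L) A).PosSemidef := by
  letI instU : UniformSpace (Matrix (Fin N) (Fin N) ℂ) := PseudoMetricSpace.toUniformSpace
  letI instT : TopologicalSpace (Matrix (Fin N) (Fin N) ℂ) := instU.toTopologicalSpace
  haveI : ContinuousStar (Matrix (Fin N) (Fin N) ℂ) := ⟨by exact continuous_id.matrix_conjTranspose⟩
  obtain ⟨L', hLL⟩ : ∃ L' : Matrix (Fin N) (Fin N) ℂ →L[ℂ] Matrix (Fin N) (Fin N) ℂ, L' = L :=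
    ⟨L, rfl⟩
  subst hLL
  have hL' : ∀ A, L' A = -Complex.I • (H * A - A * H) +
      (1 / 2 : ℂ) • ∑ p, (lam p : ℂ) •
        ((G p * (A * (G p)ᴴ) - A * (G p)ᴴ * G p) +
         (G p * A * (G p)ᴴ - (G p)ᴴ * (G p * A))) := hL
  change ∀ t : ℝ, 0 ≤ t → ∀ A : Matrix (Fin N) (Fin N) ℂ,
    A.PosSemidef → (NormedSpace.exp (t • L') A).PosSemidef
  clear hL
  rename' L' => L, hL' => hL
  intro t ht A hA
  haveI : Nonempty (Fin N) := ⟨⟨0, hN⟩⟩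
  haveI : Nontrivial (Matrix (Fin N) (Fin N) ℂ) := by
    refine ⟨0, 1, fun h => ?_⟩
    have := congr_fun (congr_fun h ⟨0, hN⟩) ⟨0, hN⟩
    simp [Matrix.one_apply] at this
  haveI : CompleteSpace (Matrix (Fin N) (Fin N) ℂ) := FiniteDimensional.complete ℂ _
  -- the Lindblad decomposition
  set S : Matrix (Fin N) (Fin N) ℂ := ∑ p, (lam p : ℂ) • ((G p)ᴴ * G p) with hS
  set K₀ : Matrix (Fin N) (Fin N) ℂ := -Complex.I • H - (1/2 : ℂ) • S with hK₀
  set K₁ : Matrix (Fin N) (Fin N) ℂ := Complex.I • H - (1/2 : ℂ) • S with hK₁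
  have hSH : Sᴴ = S := by
    rw [hS, conjTranspose_sum]
    refine Finset.sum_congr rfl fun p _ => ?_
    rw [conjTranspose_smul, conjTranspose_mul, conjTranspose_conjTranspose]
    congr 1
    simp [Complex.star_def, Complex.conj_ofReal]
  have hK : K₀ᴴ = K₁ := by
    rw [hK₀, hK₁, conjTranspose_sub, conjTranspose_smul, conjTranspose_smul, hSH, hH.eq]
    congr 1
    · simp [Complex.star_def]
    · congr 1
      simp [Complex.star_def]
  set lm := ContinuousLinearMap.mul ℂ (Matrix (Fin N) (Fin N) ℂ) with hlm
  set L₀ : Matrix (Fin N) (Fin N) ℂ →L[ℂ] Matrix (Fin N) (Fin N) ℂ := lm K₀ + lm.flip K₁ with hL₀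
  set Φ : Matrix (Fin N) (Fin N) ℂ →L[ℂ] Matrix (Fin N) (Fin N) ℂ :=
    ∑ p, (lam p : ℂ) • ((lm (G p)).comp (lm.flip ((G p)ᴴ))) with hΦ
  have hΦ_apply : ∀ B, Φ B = ∑ p, (lam p : ℂ) • (G p * (B * (G p)ᴴ)) := by
    intro B
    rw [hΦ]
    simp [hlm, ContinuousLinearMap.sum_apply]
  have key : ∀ B : Matrix (Fin N) (Fin N) ℂ,
      -Complex.I • (H * B - B * H) + (1 / 2 : ℂ) • ∑ p, (lam p : ℂ) •
        ((G p * (B * (G p)ᴴ) - B * (G p)ᴴ * G p) +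
         (G p * B * (G p)ᴴ - (G p)ᴴ * (G p * B)))
      = K₀ * B + B * K₁ + ∑ p, (lam p : ℂ) • (G p * (B * (G p)ᴴ)) := by
    intro B
    rw [hK₀, hK₁, hS]
    have e1 : (-Complex.I • H - (1/2 : ℂ) • ∑ p, (lam p : ℂ) • ((G p)ᴴ * G p)) * B
        = -Complex.I • (H * B) -
          ∑ p, ((1/2 : ℂ) * (lam p : ℂ)) • ((G p)ᴴ * (G p * B)) := by
      rw [sub_mul, smul_mul_assoc, smul_mul_assoc, Finset.sum_mul]
      congr 1
      rw [Finset.smul_sum]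
      refine Finset.sum_congr rfl fun p _ => ?_
      rw [smul_mul_assoc, smul_smul, mul_assoc]
    have e2 : B * (Complex.I • H - (1/2 : ℂ) • ∑ p, (lam p : ℂ) • ((G p)ᴴ * G p))
        = Complex.I • (B * H) -
          ∑ p, ((1/2 : ℂ) * (lam p : ℂ)) • (B * ((G p)ᴴ * G p)) := by
      rw [mul_sub, mul_smul_comm, mul_smul_comm, Finset.mul_sum]
      congr 1
      rw [Finset.smul_sum]
      refine Finset.sum_congr rfl fun p _ => ?_
      rw [mul_smul_comm, smul_smul]
    have e3 : (1 / 2 : ℂ) • ∑ p, (lam p : ℂ) •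
        ((G p * (B * (G p)ᴴ) - B * (G p)ᴴ * G p) +
         (G p * B * (G p)ᴴ - (G p)ᴴ * (G p * B)))
        = ∑ p, ((1/2 : ℂ) * (lam p : ℂ)) •
        ((G p * (B * (G p)ᴴ) - B * (G p)ᴴ * G p) +
         (G p * B * (G p)ᴴ - (G p)ᴴ * (G p * B))) := by
      rw [Finset.smul_sum]
      refine Finset.sum_congr rfl fun p _ => ?_
      rw [smul_smul]
    have e5 : ∑ p, ((1/2 : ℂ) * (lam p : ℂ)) •
        ((G p * (B * (G p)ᴴ) - B * (G p)ᴴ * G p) +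
         (G p * B * (G p)ᴴ - (G p)ᴴ * (G p * B)))
        = ∑ p, (lam p : ℂ) • (G p * (B * (G p)ᴴ))
          - ∑ p, ((1/2 : ℂ) * (lam p : ℂ)) • ((G p)ᴴ * (G p * B))
          - ∑ p, ((1/2 : ℂ) * (lam p : ℂ)) • (B * ((G p)ᴴ * G p)) := by
      rw [← Finset.sum_sub_distrib, ← Finset.sum_sub_distrib]
      refine Finset.sum_congr rfl fun p _ => ?_
      simp only [mul_assoc]
      module
    rw [e1, e2, e3, e5, smul_sub]
    simp only [neg_smul]
    abel
  have hdecomp : L = L₀ + Φ := by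
    apply ContinuousLinearMap.ext
    intro B
    rw [ContinuousLinearMap.add_apply, hΦ_apply B, hL B, key B, hL₀]
    simp [hlm]
  -- positivity of the two semigroup factors
  have posExpL₀ : ∀ s : ℝ, ∀ B : Matrix (Fin N) (Fin N) ℂ, B.PosSemidef →
      (NormedSpace.exp ((s : ℂ) • L₀) B).PosSemidef := by
    intro s B hB
    have h1 : (s : ℂ) • L₀ = lm ((s:ℂ) • K₀) + lm.flip ((s:ℂ) • K₁) := by
      rw [hL₀, smul_add]
      simp only [_root_.map_smul]
    rw [h1, hlm, aux_exp_lmul_add_rmul]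
    have hstar : NormedSpace.exp ((s:ℂ) • K₁)
        = (NormedSpace.exp ((s:ℂ) • K₀))ᴴ := by
      rw [← Matrix.star_eq_conjTranspose, star_exp]
      congr 1
      rw [star_smul, Matrix.star_eq_conjTranspose, hK]
      congr 1
      simp [Complex.star_def, Complex.conj_ofReal]
    rw [hstar]
    exact hB.mul_mul_conjTranspose_same _
  have posPhi : ∀ B : Matrix (Fin N) (Fin N) ℂ, B.PosSemidef → (Φ B).PosSemidef := by
    intro B hB
    rw [hΦ_apply B]
    refine Finset.sum_induction _ _ (fun a b ha hb => ha.add hb) Matrix.PosSemidef.zero ?_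
    intro p _
    refine aux_psd_smul ?_ (hlam p)
    have := hB.mul_mul_conjTranspose_same (G p)
    rwa [mul_assoc] at this
  have posExpPhi : ∀ s : ℝ, 0 ≤ s → ∀ B : Matrix (Fin N) (Fin N) ℂ, B.PosSemidef →
      (NormedSpace.exp ((s : ℂ) • Φ) B).PosSemidef := by
    intro s hs B hB
    have hsum := (NormedSpace.expSeries_summable' (𝕂 := ℂ) ((s:ℂ) • Φ)).hasSum
    rw [← aux_exp_eq ((s:ℂ) • Φ)] at hsum
    have htend := hsum.tendsto_sum_nat
    have hev : Tendsto
        (fun n => (∑ k ∈ Finset.range n, ((k ! : ℂ))⁻¹ • ((s:ℂ) • Φ) ^ k) B) atTop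
        (𝓝 (NormedSpace.exp ((s:ℂ) • Φ) B)) :=
      ((ContinuousLinearMap.apply ℂ (Matrix (Fin N) (Fin N) ℂ) B).continuous.tendsto _).comp htend
    have sPhiPow : ∀ k : ℕ, ∀ C : Matrix (Fin N) (Fin N) ℂ, C.PosSemidef →
        ((((s:ℂ) • Φ) ^ k) C).PosSemidef := by
      intro k
      induction k with
      | zero => intro C hC; simpa using hC
      | succ k ih =>
        intro C hC
        rw [pow_succ, ContinuousLinearMap.mul_apply, ContinuousLinearMap.smul_apply]
        exact ih _ (aux_psd_smul (posPhi C hC) hs)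
    refine aux_psd_limit _ _ ?_ hev
    intro n
    rw [ContinuousLinearMap.sum_apply]
    refine Finset.sum_induction _ _ (fun a b ha hb => ha.add hb) Matrix.PosSemidef.zero ?_
    intro k _
    rw [ContinuousLinearMap.smul_apply,
      show ((k ! : ℂ))⁻¹ = ((((k ! : ℝ))⁻¹ : ℝ) : ℂ) by push_cast; ring]
    exact aux_psd_smul (sPhiPow k B hB) (by positivity)
  -- Trotter
  have hrs : ∀ T : Matrix (Fin N) (Fin N) ℂ →L[ℂ] Matrix (Fin N) (Fin N) ℂ,
      t • T = (t : ℂ) • T := by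
    intro T
    rw [← algebraMap_smul ℂ t T]
    rfl
  have hsmul : (t : ℝ) • L = (t : ℂ) • L₀ + (t : ℂ) • Φ := by
    rw [hdecomp, smul_add, hrs L₀, hrs Φ]
  have htrot := aux_trotter ((t:ℂ) • L₀) ((t:ℂ) • Φ)
  rw [← hsmul] at htrot
  have hres : ∀ n : ℕ,
      (((NormedSpace.exp ((n : ℂ)⁻¹ • ((t:ℂ) • L₀)) *
         NormedSpace.exp ((n : ℂ)⁻¹ • ((t:ℂ) • Φ))) ^ n) A).PosSemidef := by
    intro n
    have hposmul : ∀ B : Matrix (Fin N) (Fin N) ℂ, B.PosSemidef →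
        ((NormedSpace.exp ((n : ℂ)⁻¹ • ((t:ℂ) • L₀)) *
          NormedSpace.exp ((n : ℂ)⁻¹ • ((t:ℂ) • Φ))) B).PosSemidef := by
      intro B hB
      rw [ContinuousLinearMap.mul_apply]
      have e1 : (n : ℂ)⁻¹ • ((t:ℂ) • L₀) = ((t / n : ℝ) : ℂ) • L₀ := by
        rw [smul_smul]
        congr 1
        push_cast
        ring
      have e2 : (n : ℂ)⁻¹ • ((t:ℂ) • Φ) = ((t / n : ℝ) : ℂ) • Φ := by
        rw [smul_smul]
        congr 1
        push_cast
        ring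
      rw [e1, e2]
      exact posExpL₀ _ _ (posExpPhi _ (by positivity) B hB)
    have powPos : ∀ (T : Matrix (Fin N) (Fin N) ℂ →L[ℂ] Matrix (Fin N) (Fin N) ℂ),
        (∀ B : Matrix (Fin N) (Fin N) ℂ, B.PosSemidef → (T B).PosSemidef) →
        ∀ k : ℕ, ∀ B : Matrix (Fin N) (Fin N) ℂ, B.PosSemidef → ((T ^ k) B).PosSemidef := by
      intro T hT k
      induction k with
      | zero => intro B hB; simpa using hB
      | succ k ih =>
        intro B hB
        rw [pow_succ, ContinuousLinearMap.mul_apply]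
        exact ih _ (hT B hB)
    exact powPos _ hposmul n A hA
  have hevA : Tendsto
      (fun n : ℕ => (((NormedSpace.exp ((n : ℂ)⁻¹ • ((t:ℂ) • L₀)) *
         NormedSpace.exp ((n : ℂ)⁻¹ • ((t:ℂ) • Φ))) ^ n) A)) atTop
      (𝓝 (NormedSpace.exp (t • L) A)) :=
    ((ContinuousLinearMap.apply ℂ (Matrix (Fin N) (Fin N) ℂ) A).continuous.tendsto _).comp htrot
  exact aux_psd_limit _ _ hres hevA
end
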